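/- arXiv:1505.01464 — 8 statements merged into one kernel-verified Lean document; each statement's English description precedes it below -/
import Mathlib

section
/- Let n be an odd integer with n ≥ 5 and let T = {an + b(3n−2) + c(3n−1) : a,b,c ∈ ℕ} be the numerical semigroup generated by {n, 3n−2, 3n−1}. Then the set of pseudo-Frobenius numbers of T equals {n(3n−7)/2 + 1, n(3n−7)/2 + 2}. In particular, the Frobenius number of T is F(T) = n(3n−7)/2 + 2. -/
/-- The numerical semigroup `T = ⟨n, 3n-2, 3n-1⟩` viewed inside `ℤ`. -/
def TsetZ (n : ℤ) : Set ℤ :=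
  {s | ∃ a b c : ℕ, s = (a : ℤ) * n + (b : ℤ) * (3 * n - 2) + (c : ℤ) * (3 * n - 1)}

/-- Apery-type membership criterion. -/
lemma aux_mem_iff (n : ℤ) (hn : 5 ≤ n) (z k : ℤ) (hk0 : 0 ≤ k) (hkn : k < n)
    (hdvd : n ∣ z + k) : z ∈ TsetZ n ↔ 3 * n * ((k + 1) / 2) - k ≤ z := by
  have hn0 : (0:ℤ) ≤ n := by linarith
  constructor
  · rintro ⟨a, b, c, rfl⟩
    have hA : (0:ℤ) ≤ (a:ℤ) := Int.natCast_nonneg a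
    have hB : (0:ℤ) ≤ (b:ℤ) := Int.natCast_nonneg b
    have hC : (0:ℤ) ≤ (c:ℤ) := Int.natCast_nonneg c
    set A := ((a:ℤ)) with hAdef
    set B := ((b:ℤ)) with hBdef
    set C := ((c:ℤ)) with hCdef
    have hKdvd : n ∣ (A * n + B * (3*n-2) + C * (3*n-1)) + (2*B + C) :=
      ⟨A + 3*B + 3*C, by ring⟩
    obtain ⟨t, ht0⟩ := dvd_sub hKdvd hdvd
    have ht : 2*B + C - k = n * t := by linarith
    have htnn : 0 ≤ t := by
      by_contra h
      push_neg at h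
      have h1 : t ≤ -1 := by omega
      have h2 : n * t ≤ n * (-1) := mul_le_mul_of_nonneg_left h1 hn0
      linarith
    have hnt : 5 * t ≤ n * t := mul_le_mul_of_nonneg_right hn htnn
    set j := (k+1)/2 with hj
    set J := (2*B + C + 1)/2 with hJ
    have hjf : 2*j ≤ k + 1 ∧ k ≤ 2*j := by omega
    have hJf : 2*J ≤ 2*B + C + 1 ∧ 2*B + C ≤ 2*J := by omega
    have hJS : J ≤ B + C := by omega
    have h2Jj : 5*t - 1 ≤ 2*(J - j) := by linarith [hJf.2, hjf.1]
    have h3Jj : t ≤ 3*(J - j) := by omega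
    have hq : (0:ℤ) ≤ A + 3*B + 3*C - t - 3*j := by linarith
    have key : A * n + B * (3*n-2) + C * (3*n-1) - (3*n*j - k)
        = n * (A + 3*B + 3*C - t - 3*j) := by linear_combination -ht
    linarith [key, mul_nonneg hn0 hq]
  · intro h
    set j := (k+1)/2 with hj
    obtain ⟨bz, cz, hb, hc, hk2, hjbc⟩ :
        ∃ bz cz : ℤ, 0 ≤ bz ∧ 0 ≤ cz ∧ k = 2*bz + cz ∧ j = bz + cz :=
      ⟨k / 2, k % 2, by omega, by omega, by omega, by omega⟩
    obtain ⟨aq, haq⟩ : n ∣ z - (3*n*j - k) := by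
      obtain ⟨u, hu⟩ := hdvd
      exact ⟨u - 3*j, by linear_combination hu⟩
    have ha0 : 0 ≤ aq := by
      by_contra h'
      push_neg at h'
      have h1 : aq ≤ -1 := by omega
      have h2 : n * aq ≤ n * (-1) := mul_le_mul_of_nonneg_left h1 hn0
      linarith
    refine ⟨aq.toNat, bz.toNat, cz.toNat, ?_⟩
    push_cast [Int.toNat_of_nonneg ha0, Int.toNat_of_nonneg hb, Int.toNat_of_nonneg hc]
    linear_combination haq + 3*n*hjbc - hk2

lemma aux_pos (n : ℤ) (hn : 5 ≤ n) (t : ℤ) (ht : t ∈ TsetZ n) (ht0 : t ≠ 0) : n ≤ t := by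
  obtain ⟨a, b, c, rfl⟩ := ht
  have hA : (0:ℤ) ≤ (a:ℤ) := Int.natCast_nonneg a
  have hB : (0:ℤ) ≤ (b:ℤ) := Int.natCast_nonneg b
  have hC : (0:ℤ) ≤ (c:ℤ) := Int.natCast_nonneg c
  have hsum : 1 ≤ (a:ℤ) + b + c := by
    by_contra h
    push_neg at h
    have h0 : (a:ℤ) = 0 ∧ (b:ℤ) = 0 ∧ (c:ℤ) = 0 := by omega
    exact ht0 (by rw [h0.1, h0.2.1, h0.2.2]; ring)
  have key : (a:ℤ)*n + b*(3*n-2) + c*(3*n-1) - n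
      = n*((a:ℤ)+b+c-1) + b*(2*n-2) + c*(2*n-1) := by ring
  linarith [key,
    mul_nonneg (by linarith : (0:ℤ) ≤ (a:ℤ)+b+c-1) (by linarith : (0:ℤ) ≤ n),
    mul_nonneg hB (by linarith : (0:ℤ) ≤ 2*n-2),
    mul_nonneg hC (by linarith : (0:ℤ) ≤ 2*n-1)]

lemma aux_upper (n m : ℤ) (hnm : n = 2*m+1) (hm : 2 ≤ m) (z : ℤ)
    (hz : 6*m^2 - m < z) : z ∈ TsetZ n := by
  subst hnm
  have hn : (5:ℤ) ≤ 2*m+1 := by omega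
  obtain ⟨k, hk0, hkn, hdvd⟩ : ∃ k, 0 ≤ k ∧ k < 2*m+1 ∧ (2*m+1) ∣ z + k := by
    refine ⟨(-z) % (2*m+1), Int.emod_nonneg _ (by omega), Int.emod_lt_of_pos _ (by omega), ?_⟩
    have hh := Int.emod_add_mul_ediv (-z) (2*m+1)
    exact ⟨-((-z)/(2*m+1)), by linarith⟩
  rw [aux_mem_iff (2*m+1) hn z k hk0 hkn hdvd]
  set j := (k+1)/2 with hj
  have hjk : 2*j ≤ k+1 ∧ k ≤ 2*j ∧ j ≤ m := by omega
  obtain ⟨s, hs⟩ : (2*m+1) ∣ z - (3*(2*m+1)*j - k) := by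
    obtain ⟨u, hu⟩ := hdvd
    exact ⟨u - 3*j, by linear_combination hu⟩
  have hs0 : 0 ≤ s := by
    by_contra h'
    push_neg at h'
    have h1 : s ≤ -1 := by omega
    have h2 : (2*m+1) * s ≤ (2*m+1) * (-1) := mul_le_mul_of_nonneg_left h1 (by omega)
    have h3 : (0:ℤ) ≤ (m - j) * (6*m+1) := mul_nonneg (by omega) (by omega)
    nlinarith [hs, h2, h3, hjk.1, hjk.2.1]
  nlinarith [hs, mul_nonneg (by linarith : (0:ℤ) ≤ m+m+1) hs0]

/-- For odd `n ≥ 5` and `T = ⟨n, 3n-2, 3n-1⟩`, the set of pseudo-Frobenius numbers of `T`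
is `{n(3n-7)/2 + 1, n(3n-7)/2 + 2}`; in particular the Frobenius number of `T` (the largest
integer not in `T`) is `n(3n-7)/2 + 2`. -/
theorem stmt0 (n : ℤ) (hodd : Odd n) (hn : 5 ≤ n) :
    ({z : ℤ | z ∉ TsetZ n ∧ ∀ t ∈ TsetZ n, t ≠ 0 → z + t ∈ TsetZ n} =
      {n * (3 * n - 7) / 2 + 1, n * (3 * n - 7) / 2 + 2}) ∧
    (n * (3 * n - 7) / 2 + 2 ∉ TsetZ n ∧
      ∀ z : ℤ, n * (3 * n - 7) / 2 + 2 < z → z ∈ TsetZ n) := by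
  obtain ⟨m, hm⟩ := hodd
  have hm2 : 2 ≤ m := by omega
  have hF : n * (3 * n - 7) / 2 = 6*m^2 - m - 2 := by
    have h1 : n * (3 * n - 7) = 2 * (6*m^2 - m - 2) := by rw [hm]; ring
    rw [h1]
    exact Int.mul_ediv_cancel_left _ two_ne_zero
  have hnot2 : (6*m^2 - m) ∉ TsetZ n := by
    have hdvd : n ∣ (6*m^2 - m) + (n - 2) := ⟨3*m - 1, by rw [hm]; ring⟩
    rw [aux_mem_iff n hn _ (n-2) (by omega) (by omega) hdvd]
    push_neg
    have hj : (n - 2 + 1)/2 = m := by omega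
    rw [hj, hm]
    nlinarith []
  have hnot1 : (6*m^2 - m - 1) ∉ TsetZ n := by
    have hdvd : n ∣ (6*m^2 - m - 1) + (n - 1) := ⟨3*m - 1, by rw [hm]; ring⟩
    rw [aux_mem_iff n hn _ (n-1) (by omega) (by omega) hdvd]
    push_neg
    have hj : (n - 1 + 1)/2 = m := by omega
    rw [hj, hm]
    nlinarith []
  have e1 : n * (3 * n - 7) / 2 + 1 = 6*m^2 - m - 1 := by linarith
  have e2 : n * (3 * n - 7) / 2 + 2 = 6*m^2 - m := by linarith
  refine ⟨?_, ?_, ?_⟩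
  · ext z
    simp only [Set.mem_setOf_eq, Set.mem_insert_iff, Set.mem_singleton_iff]
    constructor
    · rintro ⟨hzT, hcl⟩
      have hmemn : n ∈ TsetZ n := ⟨1, 0, 0, by push_cast; ring⟩
      have hmem32 : 3*n - 2 ∈ TsetZ n := ⟨0, 1, 0, by push_cast; ring⟩
      have h1 := hcl n hmemn (by omega)
      have h2 := hcl (3*n-2) hmem32 (by omega)
      obtain ⟨k, hk0, hkn, hdvd⟩ : ∃ k, 0 ≤ k ∧ k < n ∧ n ∣ z + k := by
        refine ⟨(-z) % n, Int.emod_nonneg _ (by omega), Int.emod_lt_of_pos _ (by omega), ?_⟩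
        have hh := Int.emod_add_mul_ediv (-z) n
        exact ⟨-((-z)/n), by linarith⟩
      have hlt : z < 3*n*((k+1)/2) - k := by
        by_contra h'
        push_neg at h'
        exact hzT ((aux_mem_iff n hn z k hk0 hkn hdvd).mpr h')
      have hge : 3*n*((k+1)/2) - k ≤ z + n :=
        (aux_mem_iff n hn (z+n) k hk0 hkn
          (by obtain ⟨u, hu⟩ := hdvd; exact ⟨u+1, by linarith⟩)).mp h1
      have hkbig : n - 2 ≤ k := by
        by_contra h'
        push_neg at h'
        have hdvd2 : n ∣ (z + (3*n-2)) + (k+2) := by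
          obtain ⟨u, hu⟩ := hdvd; exact ⟨u + 3, by linarith⟩
        have h3 := (aux_mem_iff n hn (z + (3*n-2)) (k+2) (by omega) (by omega) hdvd2).mp h2
        have hjj : (k+2+1)/2 = (k+1)/2 + 1 := by omega
        rw [hjj] at h3
        nlinarith [h3, hlt]
      obtain ⟨s, hs⟩ : n ∣ z - (3*n*((k+1)/2) - k) := by
        obtain ⟨u, hu⟩ := hdvd
        exact ⟨u - 3*((k+1)/2), by linear_combination hu⟩
      have hsm1 : s = -1 := by
        by_contra h'
        rcases lt_or_gt_of_ne h' with h'' | h''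
        · have hs2 : s ≤ -2 := by omega
          have : n * s ≤ n * (-2) := mul_le_mul_of_nonneg_left hs2 (by omega)
          linarith
        · have hs2 : (0:ℤ) ≤ s := by omega
          have : (0:ℤ) ≤ n * s := mul_nonneg (by omega) hs2
          linarith
      rw [hsm1] at hs
      rcases (by omega : k = n - 2 ∨ k = n - 1) with hk | hk
      · right
        have hj : (k+1)/2 = m := by omega
        rw [hj, hk, hm] at hs
        have hz' : z = 6*m^2 - m := by linear_combination hs
        linarith
      · left
        have hj : (k+1)/2 = m := by omega
        rw [hj, hk, hm] at hs
        have hz' : z = 6*m^2 - m - 1 := by linear_combination hs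
        linarith
    · rintro (rfl | rfl)
      · rw [e1]
        refine ⟨hnot1, ?_⟩
        intro t htT ht0
        have hnt := aux_pos n hn t htT ht0
        exact aux_upper n m hm hm2 _ (by linarith)
      · rw [e2]
        refine ⟨hnot2, ?_⟩
        intro t htT ht0
        have hnt := aux_pos n hn t htT ht0
        exact aux_upper n m hm hm2 _ (by linarith)
  · rw [e2]; exact hnot2
  · intro z hz
    exact aux_upper n m hm hm2 z (by linarith)
end

section
/- Let n be an odd integer with n ≥ 5, T = {an + b(3n−2) + c(3n−1) : a,b,c ∈ ℕ}, F(T) = n(3n−7)/2 + 2 (the Frobenius number of T), and S = T ∪ {F(T)}. Then the Frobenius number of S is F(S) = F(T) − 1, and the maximum of the Apéry set Ap(S, F(T)) equals 2·F(T) − 1 = n(3n−7) + 3. -/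
/-- The numerical semigroup `T = ⟨n, 3n-2, 3n-1⟩` as a subset of `ℕ`. -/
def Tset (n : ℕ) : Set ℕ :=
  {s | ∃ a b c : ℕ, s = a * n + b * (3 * n - 2) + c * (3 * n - 1)}

/-- The Frobenius number of `T`, `F(T) = n(3n-7)/2 + 2` (exact division since `n` is odd). -/
def FT (n : ℕ) : ℕ := n * (3 * n - 7) / 2 + 2

/-- The numerical semigroup `S = T ∪ {F(T)} = ⟨n, 3n-2, 3n-1, F(T)⟩`. -/
def Sset (n : ℕ) : Set ℕ := Tset n ∪ {FT n}

/-- The Apéry set `Ap(S, F(T)) = {s ∈ S | s - F(T) ∉ S}`. -/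
def Ap (n : ℕ) : Set ℕ := {s ∈ Sset n | ¬ ∃ t ∈ Sset n, t + FT n = s}

/-- `phi n (x,y,z) = xn + y(3n-2) + z(3n-1)`. -/
def phi (n : ℕ) (p : ℕ × ℕ × ℕ) : ℕ :=
  p.1 * n + p.2.1 * (3 * n - 2) + p.2.2 * (3 * n - 1)

/-- The set of factorizations of `s` with respect to `(n, 3n-2, 3n-1)`. -/
def Zfac (n s : ℕ) : Set (ℕ × ℕ × ℕ) := {p | phi n p = s}

/-- `p` is the normal form of `s`: a factorization with `z < 2`, `y < (n+1)/2`,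
`x < (3n-1)/2`. -/
def IsNF (n s : ℕ) (p : ℕ × ℕ × ℕ) : Prop :=
  p ∈ Zfac n s ∧ p.2.2 < 2 ∧ p.2.1 < (n + 1) / 2 ∧ p.1 < (3 * n - 1) / 2

/-- `M_i`: elements of the Apéry set having exactly `i` factorizations. -/
def Mset (n i : ℕ) : Set ℕ := {s ∈ Ap n | (Zfac n s).ncard = i}

/-- `nf(M_i)`: normal forms of elements of `M_i`. -/
def nfM (n i : ℕ) : Set (ℕ × ℕ × ℕ) := {p | ∃ s ∈ Mset n i, IsNF n s p}

/-- An L-shape associated with `Ap(S, F(T))`: (C1) `phi` is a bijection from `L` onto the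
Apéry set; (C2) `L` is downward closed for the componentwise order. -/
def IsLShape (n : ℕ) (L : Set (ℕ × ℕ × ℕ)) : Prop :=
  Set.BijOn (phi n) L (Ap n) ∧ ∀ u ∈ L, ∀ v : ℕ × ℕ × ℕ, v ≤ u → v ∈ L

/-- The L-shape `F = F₁ ∪ F₂ ∪ F₃ ∪ F₄` (in `F₃`, `y ≤ (n-7)/2` is stated over the
integers as `2y + 7 ≤ n`, so that `F₃ = ∅` when `n = 5`). -/
def Fset (n : ℕ) : Set (ℕ × ℕ × ℕ) :=
  {p | p.2.2 = 0 ∧ p.1 ≤ (3 * n - 3) / 2 ∧ p.2.1 ≤ (n - 3) / 2} ∪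
  {p | p.2.2 = 0 ∧ p.1 ≤ 1 ∧ p.2.1 = (n - 1) / 2} ∪
  {p | p.2.2 = 1 ∧ p.1 ≤ (3 * n - 3) / 2 ∧ 2 * p.2.1 + 7 ≤ n} ∪
  {p | p.2.2 = 1 ∧ p.1 ≤ (3 * n - 5) / 2 ∧ p.2.1 = (n - 5) / 2}

lemma Tset_aux_repC (k m : ℕ) (hk : 2 ≤ k) (hm : 6*k*k + 1 ≤ m + k) :
    ∃ a b c : ℕ, m = a*(2*k+1) + b*(6*k+1) + c*(6*k+2) := by
  have hd : 0 < 2*k+1 := by omega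
  obtain ⟨q, r, hr, hdm⟩ : ∃ q r, r < 2*k+1 ∧ m = (2*k+1)*q + r :=
    ⟨m / (2*k+1), m % (2*k+1), Nat.mod_lt m hd, (Nat.div_add_mod m (2*k+1)).symm⟩
  rcases Nat.eq_zero_or_pos r with h0 | hpos
  · exact ⟨q, 0, 0, by subst h0; simp [hdm]; ring⟩
  rcases Nat.even_or_odd r with ⟨s, hs⟩ | ⟨s, hs⟩
  · -- r = 2s, 1 ≤ s ≤ k ; a = q+3s-(3k+2), b = k-s, c = 1
    have hs1 : 1 ≤ s := by omega
    have hsk : s ≤ k := by omega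
    have hq3 : 3*k + 2 ≤ q + 3*s := by
      by_contra hcon
      push_neg at hcon
      have h2 : (q + 3*s)*(2*k+1) ≤ (3*k+1)*(2*k+1) :=
        Nat.mul_le_mul_right _ (by omega)
      have hks : k*1 ≤ k*s := Nat.mul_le_mul_left k hs1
      nlinarith [hdm, hm, hs, h2, hks]
    refine ⟨q + 3*s - (3*k+2), k - s, 1, ?_⟩
    have hdmz : (m:ℤ) = (2*k+1)*q + r := by exact_mod_cast hdm
    have hsz : (r:ℤ) = s + s := by exact_mod_cast hs
    zify [hq3, hsk]
    linear_combination hdmz + hsz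
  · -- r = 2s+1, 0 ≤ s ≤ k-1 ; a = q+3s+1-3k, b = k-s, c = 0
    have hsk : s ≤ k := by omega
    have hq3 : 3*k ≤ q + 3*s + 1 := by
      by_contra hcon
      push_neg at hcon
      have h2 : (q + 3*s)*(2*k+1) ≤ (3*k-2)*(2*k+1) :=
        Nat.mul_le_mul_right _ (by omega)
      have h3 : (3*k-2)*(2*k+1) + 2*(2*k+1) = 3*k*(2*k+1) := by
        have : (3*k-2) + 2 = 3*k := by omega
        nlinarith [this]
      nlinarith [hdm, hm, hs, h2, h3]
    refine ⟨q + 3*s + 1 - 3*k, k - s, 0, ?_⟩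
    have hdmz : (m:ℤ) = (2*k+1)*q + r := by exact_mod_cast hdm
    have hsz : (r:ℤ) = 2*s + 1 := by exact_mod_cast hs
    zify [hq3, hsk]
    linear_combination hdmz + hsz

lemma Tset_aux_notB (k m : ℕ) (hk : 2 ≤ k) (hm : m + k + 1 = 6*k*k) :
    ¬ ∃ a b c : ℕ, m = a*(2*k+1) + b*(6*k+1) + c*(6*k+2) := by
  rintro ⟨a, b, c, h⟩
  have hz : (m:ℤ) = a*(2*k+1) + b*(6*k+1) + c*(6*k+2) := by exact_mod_cast h
  have hmz : (m:ℤ) + k + 1 = 6*k*k := by exact_mod_cast hm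
  have ha : (0:ℤ) ≤ a := by positivity
  have hb : (0:ℤ) ≤ b := by positivity
  have hc : (0:ℤ) ≤ c := by positivity
  have hkz : (2:ℤ) ≤ k := by exact_mod_cast hk
  set t : ℤ := (a:ℤ) + 3*b + 3*c + 2 - 3*k with htdef
  have ht : 2*(b:ℤ) + c + 1 = t * (2*(k:ℤ)+1) := by
    rw [htdef]; linear_combination hz - hmz
  have ht1 : 1 ≤ t := by
    by_contra hcon
    push_neg at hcon
    have h0 : t ≤ 0 := by linarith
    have := mul_le_mul_of_nonneg_right h0 (show (0:ℤ) ≤ 2*(k:ℤ)+1 by positivity)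
    simp only [zero_mul] at this
    linarith [ht]
  have hint : (0:ℤ) ≤ (t-1)*(6*(k:ℤ)+1) :=
    mul_nonneg (by linarith) (by positivity)
  nlinarith [ht, hint, htdef]

lemma Tset_aux_FT (k : ℕ) (hk : 2 ≤ k) : FT (2*k+1) + k = 6*k*k := by
  obtain ⟨j, rfl⟩ : ∃ j, k = j + 2 := ⟨k - 2, by omega⟩
  unfold FT
  rw [show 3*(2*(j+2)+1) - 7 = 6*j + 8 from by omega,
      show (2*(j+2)+1) * (6*j+8) = 2*(6*(j*j) + 23*j + 20) from by ring,
      Nat.mul_div_cancel_left _ (by norm_num : 0 < 2),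
      show 6*(j+2)*(j+2) = 6*(j*j) + 24*j + 24 from by ring]
  generalize j*j = K
  omega

lemma Tset_eq (k : ℕ) :
    Tset (2*k+1) = {m : ℕ | ∃ a b c : ℕ, m = a*(2*k+1) + b*(6*k+1) + c*(6*k+2)} := by
  unfold Tset
  simp only [show 3*(2*k+1)-2 = 6*k+1 from by omega, show 3*(2*k+1)-1 = 6*k+2 from by omega]

lemma Tset_aux_part3 (k : ℕ) (hk : 2 ≤ k) :
    2 * FT (2*k+1) - 1 = (2*k+1) * (3*(2*k+1) - 7) + 3 := by
  have hF := Tset_aux_FT k hk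
  obtain ⟨j, rfl⟩ : ∃ j, k = j + 2 := ⟨k - 2, by omega⟩
  rw [show 3*(2*(j+2)+1) - 7 = 6*j + 8 from by omega,
      show (2*(j+2)+1) * (6*j+8) = 12*(j*j) + 46*j + 40 from by ring]
  rw [show 6*(j+2)*(j+2) = 6*(j*j) + 24*j + 24 from by ring] at hF
  generalize j*j = K at hF ⊢
  omega

/-- The Frobenius number of `S = T ∪ {F(T)}` is `F(T) - 1`, and the maximum of
`Ap(S, F(T))` is `2 F(T) - 1 = n(3n-7) + 3`. -/
theorem stmt1 (n : ℕ) (hodd : Odd n) (hn : 5 ≤ n) :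
    (FT n - 1 ∉ Sset n ∧ ∀ m : ℕ, FT n - 1 < m → m ∈ Sset n) ∧
    IsGreatest (Ap n) (2 * FT n - 1) ∧ 2 * FT n - 1 = n * (3 * n - 7) + 3 := by
  obtain ⟨k, rfl⟩ := hodd
  have hk : 2 ≤ k := by omega
  have hF := Tset_aux_FT k hk
  obtain ⟨N, hFTN⟩ : ∃ N, FT (2*k+1) = N := ⟨_, rfl⟩
  rw [hFTN] at hF
  have hN22 : 22 ≤ N := by nlinarith [hF]
  -- every m ≥ N+1 is in Tset
  have hmemT : ∀ m : ℕ, N + 1 ≤ m → m ∈ Tset (2*k+1) := by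
    intro m hm
    rw [Tset_eq]
    exact Tset_aux_repC k m hk (by omega)
  have hmemS : ∀ m : ℕ, N ≤ m → m ∈ Sset (2*k+1) := by
    intro m hm
    rcases eq_or_lt_of_le hm with heq | hlt
    · right; simp [hFTN, ← heq]
    · left; exact hmemT m hlt
  -- N - 1 is not in Sset
  have hnot : N - 1 ∉ Sset (2*k+1) := by
    rintro (hT | hFmem)
    · rw [Tset_eq] at hT
      exact Tset_aux_notB k (N-1) hk (by omega) hT
    · rw [Set.mem_singleton_iff, hFTN] at hFmem
      omega
  refine ⟨⟨by rw [hFTN]; exact hnot, ?_⟩, ?_, Tset_aux_part3 k hk⟩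
  · intro m hm
    rw [hFTN] at hm
    exact hmemS m (by omega)
  · rw [hFTN]
    constructor
    · refine ⟨hmemS _ (by omega), ?_⟩
      rintro ⟨t, htS, hteq⟩
      rw [hFTN] at hteq
      have : t = N - 1 := by omega
      exact hnot (this ▸ htS)
    · intro s hs
      obtain ⟨hsS, hno⟩ := hs
      by_contra hlt
      push_neg at hlt
      exact hno ⟨s - N, hmemS (s - N) (by omega), by rw [hFTN]; omega⟩
end

section
/- Let n be an odd integer with n ≥ 5 and let φ : ℕ³ → ℕ be the additive monoid homomorphism φ(a,b,c) = an + b(3n−2) + c(3n−1). Then the kernel congruence ker φ = {(α,β) ∈ ℕ³ × ℕ³ : φ(α) = φ(β)} is the congruence on ℕ³ generated by the three pairs ((0,0,2),(3,1,0)), ((0,(n+1)/2,0),((3n−5)/2,0,1)), and (((3n+1)/2,0,0),(0,(n−1)/2,1)). -/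
abbrev Rel2 (n : ℕ) : (ℕ × ℕ × ℕ) → (ℕ × ℕ × ℕ) → Prop := fun x y =>
  (x, y) ∈ ({(((0 : ℕ), (0 : ℕ), (2 : ℕ)), ((3 : ℕ), (1 : ℕ), (0 : ℕ))),
                   ((0, (n + 1) / 2, 0), ((3 * n - 5) / 2, 0, 1)),
                   (((3 * n + 1) / 2, 0, 0), (0, (n - 1) / 2, 1))} :
          Set ((ℕ × ℕ × ℕ) × (ℕ × ℕ × ℕ)))

private lemma phi_eval (k a b c : ℕ) :
    phi (2*k+5) (a, b, c) = a*(2*k+5) + b*(6*k+13) + c*(6*k+14) := by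
  show a * (2*k+5) + b * (3*(2*k+5) - 2) + c * (3*(2*k+5) - 1) = _
  have h1 : 3*(2*k+5) - 2 = 6*k+13 := by omega
  have h2 : 3*(2*k+5) - 1 = 6*k+14 := by omega
  rw [h1, h2]

private lemma phi_add (n : ℕ) (p q : ℕ × ℕ × ℕ) : phi n (p + q) = phi n p + phi n q := by
  obtain ⟨a,b,c⟩ := p; obtain ⟨d,e,f⟩ := q
  show (a+d) * n + (b+e) * _ + (c+f) * _ = _
  simp only [phi]
  ring

private lemma g1 (k : ℕ) : addConGen (Rel2 (2*k+5)) (0,0,2) (3,1,0) :=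
  AddConGen.Rel.of _ _ (by left; rfl)

private lemma g2 (k : ℕ) : addConGen (Rel2 (2*k+5)) (0, k+3, 0) (3*k+5, 0, 1) :=
  AddConGen.Rel.of _ _ (by
    simp only [Rel2, Set.mem_insert_iff, Set.mem_singleton_iff, Prod.mk.injEq, true_and, and_true]
    omega)

private lemma g3 (k : ℕ) : addConGen (Rel2 (2*k+5)) (3*k+8, 0, 0) (0, k+2, 1) :=
  AddConGen.Rel.of _ _ (by
    simp only [Rel2, Set.mem_insert_iff, Set.mem_singleton_iff, Prod.mk.injEq, true_and, and_true]
    omega)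

private lemma s1 (k a b c : ℕ) : addConGen (Rel2 (2*k+5)) (a,b,c+2) (a+3,b+1,c) := by
  have h := (addConGen (Rel2 (2*k+5))).add (g1 k) ((addConGen (Rel2 (2*k+5))).refl (a,b,c))
  have e1 : ((0,0,2) : ℕ×ℕ×ℕ) + (a,b,c) = (a,b,c+2) := by simp [Prod.ext_iff]; omega
  have e2 : ((3,1,0) : ℕ×ℕ×ℕ) + (a,b,c) = (a+3,b+1,c) := by simp [Prod.ext_iff]; omega
  rwa [e1, e2] at h

private lemma s2 (k a b c : ℕ) :
    addConGen (Rel2 (2*k+5)) (a, b+(k+3), c) (a+(3*k+5), b, c+1) := by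
  have h := (addConGen (Rel2 (2*k+5))).add (g2 k) ((addConGen (Rel2 (2*k+5))).refl (a,b,c))
  have e1 : ((0, k+3, 0) : ℕ×ℕ×ℕ) + (a,b,c) = (a, b+(k+3), c) := by simp [Prod.ext_iff]; omega
  have e2 : ((3*k+5, 0, 1) : ℕ×ℕ×ℕ) + (a,b,c) = (a+(3*k+5), b, c+1) := by
    simp [Prod.ext_iff]; omega
  rwa [e1, e2] at h

private lemma s3 (k a b c : ℕ) :
    addConGen (Rel2 (2*k+5)) (a+(3*k+8), b, c) (a, b+(k+2), c+1) := by
  have h := (addConGen (Rel2 (2*k+5))).add (g3 k) ((addConGen (Rel2 (2*k+5))).refl (a,b,c))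
  have e1 : ((3*k+8, 0, 0) : ℕ×ℕ×ℕ) + (a,b,c) = (a+(3*k+8), b, c) := by simp [Prod.ext_iff]; omega
  have e2 : ((0, k+2, 1) : ℕ×ℕ×ℕ) + (a,b,c) = (a, b+(k+2), c+1) := by simp [Prod.ext_iff]; omega
  rwa [e1, e2] at h

private lemma forward (k : ℕ) (x y : ℕ × ℕ × ℕ) (h : addConGen (Rel2 (2*k+5)) x y) :
    phi (2*k+5) x = phi (2*k+5) y := by
  have h' : AddConGen.Rel (Rel2 (2*k+5)) x y := h
  clear h
  induction h' with
  | of u v huv =>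
    simp only [Rel2, Set.mem_insert_iff, Set.mem_singleton_iff, Prod.mk.injEq, true_and, and_true] at huv
    have d1 : (2*k+5 + 1)/2 = k+3 := by omega
    have d2 : (3*(2*k+5) - 5)/2 = 3*k+5 := by omega
    have d3 : (3*(2*k+5) + 1)/2 = 3*k+8 := by omega
    have d4 : (2*k+5 - 1)/2 = k+2 := by omega
    rcases huv with ⟨h1, h2⟩ | ⟨h1, h2⟩ | ⟨h1, h2⟩ <;> subst h1 <;> subst h2 <;>
      rw [phi_eval, phi_eval] <;> (try simp only [d1, d2, d3, d4]) <;> ring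
  | refl u => rfl
  | symm _ ih => exact ih.symm
  | trans _ _ ih1 ih2 => exact ih1.trans ih2
  | add _ _ ih1 ih2 => rw [phi_add, phi_add, ih1, ih2]

private lemma cancel (K x y r t : ℕ) (h : x*K + r = y*K + t) :
    ∃ g : ℕ, r = g*K + t ∨ t = g*K + r := by
  rcases le_total x y with hxy | hxy
  · obtain ⟨g, rfl⟩ := Nat.le.dest hxy
    refine ⟨g, Or.inl ?_⟩
    have h2 : (x+g)*K + t = x*K + (g*K + t) := by ring
    exact Nat.add_left_cancel (h.trans h2)
  · obtain ⟨g, rfl⟩ := Nat.le.dest hxy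
    refine ⟨g, Or.inr ?_⟩
    have h2 : (y+g)*K + r = y*K + (g*K + r) := by ring
    exact (Nat.add_left_cancel (h2.symm.trans h)).symm

set_option maxHeartbeats 3000000 in
private lemma backward (k : ℕ) :
    ∀ s a b c d e f,
      a*(2*k+5) + b*(6*k+13) + c*(6*k+14) = s →
      d*(2*k+5) + e*(6*k+13) + f*(6*k+14) = s →
      addConGen (Rel2 (2*k+5)) (a,b,c) (d,e,f) := by
  intro s
  induction s using Nat.strong_induction_on with
  | _ s IH =>
  intro a b c d e f hp hq
  rcases Nat.eq_zero_or_pos s with rfl | hs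
  · simp only [Nat.add_eq_zero, Nat.mul_eq_zero] at hp hq
    have h6 : a = 0 ∧ b = 0 ∧ c = 0 ∧ d = 0 ∧ e = 0 ∧ f = 0 := by omega
    obtain ⟨rfl, rfl, rfl, rfl, rfl, rfl⟩ := h6
    exact (addConGen (Rel2 (2*k+5))).refl _
  have shared : ∀ a b c d e f,
      a*(2*k+5) + b*(6*k+13) + c*(6*k+14) = s →
      d*(2*k+5) + e*(6*k+13) + f*(6*k+14) = s →
      (0 < a ∧ 0 < d ∨ 0 < b ∧ 0 < e ∨ 0 < c ∧ 0 < f) →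
      addConGen (Rel2 (2*k+5)) (a,b,c) (d,e,f) := by
    rintro a b c d e f hp hq (⟨h1,h2⟩|⟨h1,h2⟩|⟨h1,h2⟩)
    · obtain ⟨a', rfl⟩ : ∃ a', a = a'+1 := ⟨a-1, by omega⟩
      obtain ⟨d', rfl⟩ : ∃ d', d = d'+1 := ⟨d-1, by omega⟩
      have hp' : a'*(2*k+5) + b*(6*k+13) + c*(6*k+14) + (2*k+5) = s := by rw [← hp]; ring
      have hq' : d'*(2*k+5) + e*(6*k+13) + f*(6*k+14) + (2*k+5) = s := by rw [← hq]; ring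
      have hlt : a'*(2*k+5) + b*(6*k+13) + c*(6*k+14) < s := by linarith
      have heq : d'*(2*k+5) + e*(6*k+13) + f*(6*k+14)
          = a'*(2*k+5) + b*(6*k+13) + c*(6*k+14) := by linarith
      have h := IH _ hlt a' b c d' e f rfl heq
      have h2 := (addConGen (Rel2 (2*k+5))).add h
        ((addConGen (Rel2 (2*k+5))).refl ((1:ℕ),(0:ℕ),(0:ℕ)))
      simpa using h2
    · obtain ⟨b', rfl⟩ : ∃ b', b = b'+1 := ⟨b-1, by omega⟩
      obtain ⟨e', rfl⟩ : ∃ e', e = e'+1 := ⟨e-1, by omega⟩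
      have hp' : a*(2*k+5) + b'*(6*k+13) + c*(6*k+14) + (6*k+13) = s := by rw [← hp]; ring
      have hq' : d*(2*k+5) + e'*(6*k+13) + f*(6*k+14) + (6*k+13) = s := by rw [← hq]; ring
      have hlt : a*(2*k+5) + b'*(6*k+13) + c*(6*k+14) < s := by linarith
      have heq : d*(2*k+5) + e'*(6*k+13) + f*(6*k+14)
          = a*(2*k+5) + b'*(6*k+13) + c*(6*k+14) := by linarith
      have h := IH _ hlt a b' c d e' f rfl heq
      have h2 := (addConGen (Rel2 (2*k+5))).add h
        ((addConGen (Rel2 (2*k+5))).refl ((0:ℕ),(1:ℕ),(0:ℕ)))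
      simpa using h2
    · obtain ⟨c', rfl⟩ : ∃ c', c = c'+1 := ⟨c-1, by omega⟩
      obtain ⟨f', rfl⟩ : ∃ f', f = f'+1 := ⟨f-1, by omega⟩
      have hp' : a*(2*k+5) + b*(6*k+13) + c'*(6*k+14) + (6*k+14) = s := by rw [← hp]; ring
      have hq' : d*(2*k+5) + e*(6*k+13) + f'*(6*k+14) + (6*k+14) = s := by rw [← hq]; ring
      have hlt : a*(2*k+5) + b*(6*k+13) + c'*(6*k+14) < s := by linarith
      have heq : d*(2*k+5) + e*(6*k+13) + f'*(6*k+14)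
          = a*(2*k+5) + b*(6*k+13) + c'*(6*k+14) := by linarith
      have h := IH _ hlt a b c' d e f' rfl heq
      have h2 := (addConGen (Rel2 (2*k+5))).add h
        ((addConGen (Rel2 (2*k+5))).refl ((0:ℕ),(0:ℕ),(1:ℕ)))
      simpa using h2
  have half : ∀ a b d e f,
      a*(2*k+5) + b*(6*k+13) = s →
      d*(2*k+5) + e*(6*k+13) + f*(6*k+14) = s →
      (a = 0 ∨ d = 0) → (b = 0 ∨ e = 0) →
      addConGen (Rel2 (2*k+5)) (a,b,0) (d,e,f) := by
    intro a b d e f hp hq hxd hybe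
    rcases Nat.lt_or_ge f 2 with hf | hf
    · rcases (show f = 0 ∨ f = 1 by omega) with rfl | rfl
      · -- f = 0
        rcases hybe with rfl | rfl
        · -- b = 0 : p = (a,0,0)
          have ha : 0 < a := by
            rcases Nat.eq_zero_or_pos a with rfl | h
            · exfalso; simp at hp; omega
            · exact h
          have hd : d = 0 := by omega
          subst hd
          have he : 0 < e := by
            rcases Nat.eq_zero_or_pos e with rfl | h
            · exfalso; simp at hq; omega
            · exact h
          have hr : (3*e)*(2*k+5) = e*(6*k+13) + 2*e := by ring
          have key : a*(2*k+5) + 2*e = (3*e)*(2*k+5) + 0 := by linarith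
          obtain ⟨g, hg | hg⟩ := cancel (2*k+5) a (3*e) (2*e) 0 key
          · have hg0 : 0 < g := by
              rcases Nat.eq_zero_or_pos g with rfl | h
              · exfalso; simp at hg <;> omega
              · exact h
            have hge : 1*(2*k+5) ≤ g*(2*k+5) := Nat.mul_le_mul_right _ hg0
            have he2 : 2*k+5 ≤ 2*e := by linarith
            obtain ⟨e', rfl⟩ : ∃ e', e = e' + (k+3) := ⟨e - (k+3), by omega⟩
            have hstep := s2 k 0 e' 0
            have hp' : a*(2*k+5) + 0*(6*k+13) + 0*(6*k+14) = s := by linarith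
            have hr2 : (0+(3*k+5))*(2*k+5) + e'*(6*k+13) + (0+1)*(6*k+14)
                = 0*(2*k+5) + (e'+(k+3))*(6*k+13) + 0*(6*k+14) := by ring
            have hq' : (0+(3*k+5))*(2*k+5) + e'*(6*k+13) + (0+1)*(6*k+14) = s := by
              linarith
            have hshare := shared a 0 0 (0+(3*k+5)) e' (0+1) hp' hq'
              (Or.inl ⟨ha, by omega⟩)
            exact (addConGen (Rel2 (2*k+5))).trans hshare
              ((addConGen (Rel2 (2*k+5))).symm hstep)
          · exfalso
            obtain ⟨-, h2⟩ := Nat.add_eq_zero.mp hg.symm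
            omega
        · -- e = 0 : q = (d,0,0)
          have hd : 0 < d := by
            rcases Nat.eq_zero_or_pos d with rfl | h
            · exfalso; simp at hq; omega
            · exact h
          rcases Nat.eq_zero_or_pos b with rfl | hb
          · exfalso
            have h1 : a*(2*k+5) = d*(2*k+5) := by linarith
            have h2 : a = d := Nat.eq_of_mul_eq_mul_right (by omega) h1
            have hd0 : d = 0 := by omega
            rw [hd0] at hq; simp at hq; omega
          · have hr : (a+3*b)*(2*k+5) = a*(2*k+5) + b*(6*k+13) + 2*b := by ring
            have key : (a+3*b)*(2*k+5) + 0 = d*(2*k+5) + 2*b := by linarith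
            obtain ⟨g, hg | hg⟩ := cancel (2*k+5) (a+3*b) d 0 (2*b) key
            · exfalso
              obtain ⟨-, h2⟩ := Nat.add_eq_zero.mp hg.symm
              omega
            · have hg0 : 0 < g := by
                rcases Nat.eq_zero_or_pos g with rfl | h
                · exfalso; simp at hg <;> omega
                · exact h
              have hge : 1*(2*k+5) ≤ g*(2*k+5) := Nat.mul_le_mul_right _ hg0
              have hb2 : 2*k+5 ≤ 2*b := by linarith
              obtain ⟨b', rfl⟩ : ∃ b', b = b' + (k+3) := ⟨b - (k+3), by omega⟩
              have hstep := s2 k a b' 0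
              have hq' : d*(2*k+5) + 0*(6*k+13) + 0*(6*k+14) = s := by linarith
              have hr3 : (a+(3*k+5))*(2*k+5) + b'*(6*k+13) + (0+1)*(6*k+14)
                  = a*(2*k+5) + (b'+(k+3))*(6*k+13) := by ring
              have hp' : (a+(3*k+5))*(2*k+5) + b'*(6*k+13) + (0+1)*(6*k+14) = s := by
                linarith
              have hshare := shared (a+(3*k+5)) b' (0+1) d 0 0 hp' hq'
                (Or.inl ⟨by omega, hd⟩)
              exact (addConGen (Rel2 (2*k+5))).trans hstep hshare
      · -- f = 1
        rcases hybe with rfl | rfl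
        · -- b = 0 : p = (a,0,0)
          have ha : 0 < a := by
            rcases Nat.eq_zero_or_pos a with rfl | h
            · exfalso; simp at hp; omega
            · exact h
          have hd : d = 0 := by omega
          subst hd
          have hr : (3*e+3)*(2*k+5) = e*(6*k+13) + 1*(6*k+14) + (2*e+1) := by ring
          have key : a*(2*k+5) + (2*e+1) = (3*e+3)*(2*k+5) + 0 := by linarith
          obtain ⟨g, hg | hg⟩ := cancel (2*k+5) a (3*e+3) (2*e+1) 0 key
          · have hg0 : 0 < g := by
              rcases Nat.eq_zero_or_pos g with rfl | h
              · exfalso; simp at hg <;> omega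
              · exact h
            have hge : 1*(2*k+5) ≤ g*(2*k+5) := Nat.mul_le_mul_right _ hg0
            have he2 : 2*k+5 ≤ 2*e+1 := by linarith
            rcases (show e = k+2 ∨ k+3 ≤ e by omega) with rfl | he3
            · have hr2 : (3*k+8)*(2*k+5) = (k+2)*(6*k+13) + 1*(6*k+14) := by ring
              have hq' : (3*k+8)*(2*k+5) + 0*(6*k+13) + 0*(6*k+14) = s := by linarith
              have hp' : a*(2*k+5) + 0*(6*k+13) + 0*(6*k+14) = s := by linarith
              have hshare := shared a 0 0 (3*k+8) 0 0 hp' hq' (Or.inl ⟨ha, by omega⟩)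
              exact (addConGen (Rel2 (2*k+5))).trans hshare (g3 k)
            · obtain ⟨e', rfl⟩ : ∃ e', e = e' + (k+3) := ⟨e - (k+3), by omega⟩
              have hstep := s2 k 0 e' 1
              have hp' : a*(2*k+5) + 0*(6*k+13) + 0*(6*k+14) = s := by linarith
              have hr2 : (0+(3*k+5))*(2*k+5) + e'*(6*k+13) + (1+1)*(6*k+14)
                  = 0*(2*k+5) + (e'+(k+3))*(6*k+13) + 1*(6*k+14) := by ring
              have hq' : (0+(3*k+5))*(2*k+5) + e'*(6*k+13) + (1+1)*(6*k+14) = s := by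
                linarith
              have hshare := shared a 0 0 (0+(3*k+5)) e' (1+1) hp' hq'
                (Or.inl ⟨ha, by omega⟩)
              exact (addConGen (Rel2 (2*k+5))).trans hshare
                ((addConGen (Rel2 (2*k+5))).symm hstep)
          · exfalso
            obtain ⟨-, h2⟩ := Nat.add_eq_zero.mp hg.symm
            omega
        · -- e = 0 : q = (d, 0, 1)
          have hr : (a+3*b)*(2*k+5) = a*(2*k+5) + b*(6*k+13) + 2*b := by ring
          have hr2 : (d+3)*(2*k+5) = d*(2*k+5) + 1*(6*k+14) + 1 := by ring
          have key : (a+3*b)*(2*k+5) + 1 = (d+3)*(2*k+5) + 2*b := by linarith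
          obtain ⟨g, hg | hg⟩ := cancel (2*k+5) (a+3*b) (d+3) 1 (2*b) key
          · exfalso
            rcases Nat.eq_zero_or_pos g with rfl | hg0
            · simp at hg <;> omega
            · have hge : 1*(2*k+5) ≤ g*(2*k+5) := Nat.mul_le_mul_right _ hg0
              have : 2*k+5 ≤ 1 := by linarith
              omega
          · have hg0 : 0 < g := by
              rcases Nat.eq_zero_or_pos g with rfl | h
              · exfalso; simp at hg <;> omega
              · exact h
            have hge : 1*(2*k+5) ≤ g*(2*k+5) := Nat.mul_le_mul_right _ hg0
            have hb2 : 2*k+6 ≤ 2*b := by linarith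
            obtain ⟨b', rfl⟩ : ∃ b', b = b' + (k+3) := ⟨b - (k+3), by omega⟩
            have hstep := s2 k a b' 0
            have hr3 : (a+(3*k+5))*(2*k+5) + b'*(6*k+13) + (0+1)*(6*k+14)
                = a*(2*k+5) + (b'+(k+3))*(6*k+13) := by ring
            have hp' : (a+(3*k+5))*(2*k+5) + b'*(6*k+13) + (0+1)*(6*k+14) = s := by
              linarith
            have hshare := shared (a+(3*k+5)) b' (0+1) d 0 1 hp' hq
              (Or.inr (Or.inr ⟨by omega, by omega⟩))
            exact (addConGen (Rel2 (2*k+5))).trans hstep hshare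
    · -- 2 ≤ f
      obtain ⟨f', rfl⟩ : ∃ f', f = f' + 2 := ⟨f - 2, by omega⟩
      have hstep := s1 k d e f'
      have hr : (d+3)*(2*k+5) + (e+1)*(6*k+13) + f'*(6*k+14)
          = d*(2*k+5) + e*(6*k+13) + (f'+2)*(6*k+14) := by ring
      have hq' : (d+3)*(2*k+5) + (e+1)*(6*k+13) + f'*(6*k+14) = s := by linarith
      have hp3 : a*(2*k+5) + b*(6*k+13) + 0*(6*k+14) = s := by linarith
      rcases Nat.eq_zero_or_pos a with rfl | ha
      · have hb : 0 < b := by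
          rcases Nat.eq_zero_or_pos b with rfl | h
          · exfalso; simp at hp; omega
          · exact h
        have hshare := shared 0 b 0 (d+3) (e+1) f' hp3 hq'
          (Or.inr (Or.inl ⟨hb, by omega⟩))
        exact (addConGen (Rel2 (2*k+5))).trans hshare
          ((addConGen (Rel2 (2*k+5))).symm hstep)
      · have hshare := shared a b 0 (d+3) (e+1) f' hp3 hq'
          (Or.inl ⟨ha, by omega⟩)
        exact (addConGen (Rel2 (2*k+5))).trans hshare
          ((addConGen (Rel2 (2*k+5))).symm hstep)
  by_cases hdis : (0 < a ∧ 0 < d ∨ 0 < b ∧ 0 < e ∨ 0 < c ∧ 0 < f)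
  · exact shared a b c d e f hp hq hdis
  · have hx : a = 0 ∨ d = 0 := by omega
    have hy : b = 0 ∨ e = 0 := by omega
    have hz : c = 0 ∨ f = 0 := by omega
    rcases hz with rfl | rfl
    · have hp2 : a*(2*k+5) + b*(6*k+13) = s := by linarith
      exact half a b d e f hp2 hq hx hy
    · have hq2 : d*(2*k+5) + e*(6*k+13) = s := by linarith
      exact (addConGen (Rel2 (2*k+5))).symm
        (half d e a b c hq2 hp hx.symm hy.symm)

/-- The kernel congruence of `phi : ℕ³ → ℕ` is the congruence on `ℕ³` generated by the
three pairs of the minimal presentation. -/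
theorem stmt2 (n : ℕ) (hodd : Odd n) (hn : 5 ≤ n) :
    ∀ α β : ℕ × ℕ × ℕ,
      (addConGen (fun x y : ℕ × ℕ × ℕ =>
        (x, y) ∈ ({(((0 : ℕ), (0 : ℕ), (2 : ℕ)), ((3 : ℕ), (1 : ℕ), (0 : ℕ))),
                   ((0, (n + 1) / 2, 0), ((3 * n - 5) / 2, 0, 1)),
                   (((3 * n + 1) / 2, 0, 0), (0, (n - 1) / 2, 1))} :
          Set ((ℕ × ℕ × ℕ) × (ℕ × ℕ × ℕ))))) α β
      ↔ phi n α = phi n β := by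
  obtain ⟨kk, rfl⟩ : ∃ kk, n = 2*kk+5 := by
    obtain ⟨t, ht⟩ := hodd
    exact ⟨t-2, by omega⟩
  intro α β
  constructor
  · intro h
    exact forward kk α β h
  · intro h
    obtain ⟨a, b, c⟩ := α
    obtain ⟨d, e, f⟩ := β
    rw [phi_eval, phi_eval] at h
    exact backward kk (d*(2*kk+5)+e*(6*kk+13)+f*(6*kk+14)) a b c d e f h rfl
end

section
/- Let n be an odd integer with n ≥ 5, T = {an + b(3n−2) + c(3n−1) : a,b,c ∈ ℕ}, F(T) = n(3n−7)/2 + 2, and S = T ∪ {F(T)}. Then for every s ∈ Ap(S, F(T)) there exists exactly one triple (x,y,z) ∈ ℕ³ with xn + y(3n−2) + z(3n−1) = s such that z < 2, y < (n+1)/2 and x < (3n−1)/2. -/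
lemma reduce_aux (j : ℕ) : ∀ N x y z : ℕ, y + z ≤ N →
    ∃ x' y' z' : ℕ, x'*(2*j+5) + y'*(6*j+13) + z'*(6*j+14)
      = x*(2*j+5) + y*(6*j+13) + z*(6*j+14) ∧ z' ≤ 1 ∧ y' ≤ j+2 := by
  intro N
  induction N with
  | zero => intro x y z h; exact ⟨x, y, z, rfl, by omega, by omega⟩
  | succ N ih =>
    intro x y z h
    by_cases hz : 2 ≤ z
    · obtain ⟨w, rfl⟩ : ∃ w, z = w + 2 := ⟨z-2, by omega⟩
      obtain ⟨x',y',z',he,h1,h2⟩ := ih (x+3) (y+1) w (by omega)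
      exact ⟨x',y',z', by rw [he]; ring, h1, h2⟩
    · by_cases hy : j+3 ≤ y
      · obtain ⟨u, rfl⟩ : ∃ u, y = u + (j+3) := ⟨y-(j+3), by omega⟩
        obtain ⟨x',y',z',he,h1,h2⟩ := ih (x+(3*j+5)) u (z+1) (by omega)
        exact ⟨x',y',z', by rw [he]; ring, h1, h2⟩
      · exact ⟨x,y,z, rfl, by omega, by omega⟩

lemma uniq_aux (j x y z x' y' z' : ℕ)
    (hz : z ≤ 1) (hy : y ≤ j+2) (hx : x ≤ 3*j+6)
    (hz' : z' ≤ 1) (hy' : y' ≤ j+2) (hx' : x' ≤ 3*j+6)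
    (heq : x*(2*j+5) + y*(6*j+13) + z*(6*j+14) = x'*(2*j+5) + y'*(6*j+13) + z'*(6*j+14)) :
    x = x' ∧ y = y' ∧ z = z' := by
  have heq' : (x:ℤ)*(2*(j:ℤ)+5) + (y:ℤ)*(6*(j:ℤ)+13) + (z:ℤ)*(6*(j:ℤ)+14)
      = (x':ℤ)*(2*(j:ℤ)+5) + (y':ℤ)*(6*(j:ℤ)+13) + (z':ℤ)*(6*(j:ℤ)+14) := by
    exact_mod_cast heq
  set d : ℤ := (x:ℤ)+3*(y:ℤ)+3*(z:ℤ)-((x':ℤ)+3*(y':ℤ)+3*(z':ℤ)) with hd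
  have key : d*(2*(j:ℤ)+5) = (2*(y:ℤ)+(z:ℤ)) - (2*(y':ℤ)+(z':ℤ)) := by
    rw [hd]; linear_combination heq'
  have hb1 : (2*(y:ℤ)+(z:ℤ)) - (2*(y':ℤ)+(z':ℤ)) ≤ 2*(j:ℤ)+5 := by omega
  have hb2 : -(2*(j:ℤ)+5) ≤ (2*(y:ℤ)+(z:ℤ)) - (2*(y':ℤ)+(z':ℤ)) := by omega
  have hj : (0:ℤ) ≤ (j:ℤ) := Int.natCast_nonneg j
  have hd1 : d ≤ 1 := by nlinarith
  have hd2 : -1 ≤ d := by nlinarith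
  have hcase : d = -1 ∨ d = 0 ∨ d = 1 := by omega
  rcases hcase with h | h | h <;> rw [h] at key <;> omega

lemma FT_eq (j : ℕ) : FT (2*j+5) = 6*j^2+23*j+22 := by
  unfold FT
  have h1 : (2*j+5)*(3*(2*j+5)-7) = 2*(6*j^2+23*j+20) := by
    have h : 3*(2*j+5)-7 = 6*j+8 := by omega
    rw [h]; ring
  have h2 : 2*(6*j^2+23*j+20)/2 = 6*j^2+23*j+20 :=
    Nat.mul_div_cancel_left _ (by norm_num)
  rw [h1, h2]

/-- Every element of the Apéry set has exactly one factorization `(x,y,z)` with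
`z < 2`, `y < (n+1)/2` and `x < (3n-1)/2`. -/
theorem stmt3 (n : ℕ) (hodd : Odd n) (hn : 5 ≤ n) :
    ∀ s ∈ Ap n, ∃! p : ℕ × ℕ × ℕ,
      p ∈ Zfac n s ∧ p.2.2 < 2 ∧ p.2.1 < (n + 1) / 2 ∧ p.1 < (3 * n - 1) / 2 := by
  obtain ⟨m, hm⟩ := hodd
  obtain ⟨j, rfl⟩ : ∃ j, n = 2*j+5 := ⟨m-2, by omega⟩
  have e2 : 3*(2*j+5)-2 = 6*j+13 := by omega
  have e1 : 3*(2*j+5)-1 = 6*j+14 := by omega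
  intro s hs
  have hsT : ∃ a b c : ℕ, s = a*(2*j+5) + b*(6*j+13) + c*(6*j+14) := by
    rcases hs.1 with h | h
    · obtain ⟨a,b,c,h⟩ := h
      exact ⟨a,b,c, by rw [h, e2, e1]⟩
    · exfalso
      refine hs.2 ⟨0, Or.inl ⟨0,0,0, by simp⟩, ?_⟩
      have : s = FT (2*j+5) := h
      omega
  obtain ⟨a,b,c,hs_eq⟩ := hsT
  obtain ⟨x,y,z,he,hz2,hy2⟩ := reduce_aux j (b+c) a b c le_rfl
  rw [← hs_eq] at he
  have hx2 : x ≤ 3*j+6 := by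
    by_contra hc
    obtain ⟨v, hv⟩ : ∃ v, x = v + (3*j+7) := ⟨x-(3*j+7), by omega⟩
    refine hs.2 ⟨v*(2*j+5) + (y+1)*(6*j+13) + z*(6*j+14),
      Or.inl ⟨v, y+1, z, by rw [e2, e1]⟩, ?_⟩
    rw [FT_eq, ← he, hv]; ring
  refine ⟨(x,y,z), ⟨?_, show z < 2 by omega, show y < (2*j+5+1)/2 by omega,
    show x < (3*(2*j+5)-1)/2 by omega⟩, ?_⟩
  · show phi (2*j+5) (x,y,z) = s
    unfold phi
    simpa [e1, e2] using he
  · rintro ⟨x',y',z'⟩ ⟨hq1, hq2, hq3, hq4⟩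
    have hq1' : x'*(2*j+5) + y'*(6*j+13) + z'*(6*j+14) = s := by
      have : phi (2*j+5) (x',y',z') = s := hq1
      unfold phi at this
      simpa [e1, e2] using this
    have hq2' : z' < 2 := hq2
    have hq3' : y' < (2*j+5+1)/2 := hq3
    have hq4' : x' < (3*(2*j+5)-1)/2 := hq4
    have hb3 : y' ≤ j+2 := by omega
    have hb4 : x' ≤ 3*j+6 := by omega
    have := uniq_aux j x' y' z' x y z (by omega) hb3 hb4 hz2 hy2 hx2
      (hq1'.trans he.symm)
    simp only [Prod.mk.injEq]
    exact this
end

section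
/- Let n be an odd integer with n ≥ 5, T = {an + b(3n−2) + c(3n−1) : a,b,c ∈ ℕ}, F(T) = n(3n−7)/2 + 2, and S = T ∪ {F(T)}. Then the following four numbers all belong to Ap(S, F(T)): ((3n−3)/2)·n + ((n−3)/2)·(3n−2); n + ((n−1)/2)·(3n−2); ((3n−5)/2)·n + ((n−5)/2)·(3n−2) + (3n−1); and ((3n−3)/2)·n + ((n−7)/2)·(3n−2) + (3n−1). -/
/-! ### Auxiliary non-membership lemmas over `ℤ`

With `n = 2k+5`, the generators are `2k+5`, `6k+13`, `6k+14`, and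
`F(T) = 6k²+23k+22`.  We show that the differences `s - F(T)` for the four
distinguished elements `s` (namely `6k²+23k+21`, `4k+9`, `6k²+21k+17`,
`6k²+17k+9`) are not in `T`. -/

lemma auxd1 (k a b c : ℤ) (hk : 0 ≤ k) (ha : 0 ≤ a) (hb : 0 ≤ b) (hc : 0 ≤ c)
    (h : a*(2*k+5)+b*(6*k+13)+c*(6*k+14) = 6*k^2+23*k+21) : False := by
  have hn1 : 0 ≤ a*(2*k+5) := by positivity
  have hn2 : 0 ≤ b*(6*k+13) := by positivity
  have hn3 : 0 ≤ c*(6*k+14) := by positivity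
  have hb1 : b ≤ k+1 := by
    by_contra h'; push_neg at h'
    have : (k+2)*(6*k+13) ≤ b*(6*k+13) :=
      mul_le_mul_of_nonneg_right (by linarith) (by linarith)
    nlinarith
  have hc1 : c ≤ k+1 := by
    by_contra h'; push_neg at h'
    have : (k+2)*(6*k+14) ≤ c*(6*k+14) :=
      mul_le_mul_of_nonneg_right (by linarith) (by linarith)
    nlinarith
  have hK : (a+3*b+3*c)*(2*k+5) = 6*k^2+23*k+21+2*b+c := by linear_combination h
  have hK1 : 3*k+5 ≤ a+3*b+3*c := by
    by_contra h'; push_neg at h'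
    have : (a+3*b+3*c)*(2*k+5) ≤ (3*k+4)*(2*k+5) :=
      mul_le_mul_of_nonneg_right (by linarith) (by linarith)
    nlinarith
  have hK2 : a+3*b+3*c ≤ 3*k+5 := by
    by_contra h'; push_neg at h'
    have : (3*k+6)*(2*k+5) ≤ (a+3*b+3*c)*(2*k+5) :=
      mul_le_mul_of_nonneg_right (by linarith) (by linarith)
    nlinarith
  have hKeq : a+3*b+3*c = 3*k+5 := le_antisymm hK2 hK1
  rw [hKeq] at hK
  have h2bc : 2*b+c = 2*k+4 := by nlinarith [hK]
  linarith

lemma auxd2 (k a b c : ℤ) (hk : 0 ≤ k) (ha : 0 ≤ a) (hb : 0 ≤ b) (hc : 0 ≤ c)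
    (h : a*(2*k+5)+b*(6*k+13)+c*(6*k+14) = 4*k+9) : False := by
  have hn1 : 0 ≤ a*(2*k+5) := by positivity
  have hn2 : 0 ≤ b*(6*k+13) := by positivity
  have hn3 : 0 ≤ c*(6*k+14) := by positivity
  have hb0 : b = 0 := by
    by_contra h'
    have : 1*(6*k+13) ≤ b*(6*k+13) :=
      mul_le_mul_of_nonneg_right (by omega) (by linarith)
    nlinarith
  have hc0 : c = 0 := by
    by_contra h'
    have : 1*(6*k+14) ≤ c*(6*k+14) :=
      mul_le_mul_of_nonneg_right (by omega) (by linarith)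
    nlinarith
  subst hb0 hc0
  have ha2 : a ≤ 1 ∨ 2 ≤ a := by omega
  rcases ha2 with h2 | h2
  · have : a*(2*k+5) ≤ 1*(2*k+5) := mul_le_mul_of_nonneg_right h2 (by linarith)
    nlinarith
  · have : 2*(2*k+5) ≤ a*(2*k+5) := mul_le_mul_of_nonneg_right h2 (by linarith)
    nlinarith

lemma auxd3 (k a b c : ℤ) (hk : 0 ≤ k) (ha : 0 ≤ a) (hb : 0 ≤ b) (hc : 0 ≤ c)
    (h : a*(2*k+5)+b*(6*k+13)+c*(6*k+14) = 6*k^2+21*k+17) : False := by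
  have hn1 : 0 ≤ a*(2*k+5) := by positivity
  have hn2 : 0 ≤ b*(6*k+13) := by positivity
  have hn3 : 0 ≤ c*(6*k+14) := by positivity
  have hb1 : b ≤ k+1 := by
    by_contra h'; push_neg at h'
    have : (k+2)*(6*k+13) ≤ b*(6*k+13) :=
      mul_le_mul_of_nonneg_right (by linarith) (by linarith)
    nlinarith
  have hc1 : c ≤ k+1 := by
    by_contra h'; push_neg at h'
    have : (k+2)*(6*k+14) ≤ c*(6*k+14) :=
      mul_le_mul_of_nonneg_right (by linarith) (by linarith)
    nlinarith
  have hK : (a+3*b+3*c)*(2*k+5) = 6*k^2+21*k+17+2*b+c := by linear_combination h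
  have hK1 : 3*k+4 ≤ a+3*b+3*c := by
    by_contra h'; push_neg at h'
    have : (a+3*b+3*c)*(2*k+5) ≤ (3*k+3)*(2*k+5) :=
      mul_le_mul_of_nonneg_right (by linarith) (by linarith)
    nlinarith
  have hK2 : a+3*b+3*c ≤ 3*k+4 := by
    by_contra h'; push_neg at h'
    have : (3*k+5)*(2*k+5) ≤ (a+3*b+3*c)*(2*k+5) :=
      mul_le_mul_of_nonneg_right (by linarith) (by linarith)
    nlinarith
  have hKeq : a+3*b+3*c = 3*k+4 := le_antisymm hK2 hK1
  rw [hKeq] at hK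
  have h2bc : 2*b+c = 2*k+3 := by nlinarith [hK]
  linarith

lemma auxd4 (k a b c : ℤ) (hk : 0 ≤ k) (ha : 0 ≤ a) (hb : 0 ≤ b) (hc : 0 ≤ c)
    (h : a*(2*k+5)+b*(6*k+13)+c*(6*k+14) = 6*k^2+17*k+9) : False := by
  have hn1 : 0 ≤ a*(2*k+5) := by positivity
  have hn2 : 0 ≤ b*(6*k+13) := by positivity
  have hn3 : 0 ≤ c*(6*k+14) := by positivity
  have hb1 : b ≤ k := by
    by_contra h'; push_neg at h'
    have : (k+1)*(6*k+13) ≤ b*(6*k+13) :=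
      mul_le_mul_of_nonneg_right (by linarith) (by linarith)
    nlinarith
  have hc1 : c ≤ k := by
    by_contra h'; push_neg at h'
    have : (k+1)*(6*k+14) ≤ c*(6*k+14) :=
      mul_le_mul_of_nonneg_right (by linarith) (by linarith)
    nlinarith
  have hK : (a+3*b+3*c)*(2*k+5) = 6*k^2+17*k+9+2*b+c := by linear_combination h
  have hK1 : 3*k+2 ≤ a+3*b+3*c := by
    by_contra h'; push_neg at h'
    have : (a+3*b+3*c)*(2*k+5) ≤ (3*k+1)*(2*k+5) :=
      mul_le_mul_of_nonneg_right (by linarith) (by linarith)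
    nlinarith
  have hK2 : a+3*b+3*c ≤ 3*k+2 := by
    by_contra h'; push_neg at h'
    have : (3*k+3)*(2*k+5) ≤ (a+3*b+3*c)*(2*k+5) :=
      mul_le_mul_of_nonneg_right (by linarith) (by linarith)
    nlinarith
  have hKeq : a+3*b+3*c = 3*k+2 := le_antisymm hK2 hK1
  rw [hKeq] at hK
  have h2bc : 2*b+c = 2*k+1 := by nlinarith [hK]
  linarith

lemma FT_val (k : ℕ) : FT (2*k+5) = 6*k^2+23*k+22 := by
  unfold FT
  have e3 : 3*(2*k+5)-7 = 2*(3*k+4) := by omega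
  rw [e3]
  have : (2*k+5)*(2*(3*k+4)) = (6*k^2+23*k+20)*2 := by ring
  rw [this, Nat.mul_div_cancel _ (by norm_num)]

/-- Sufficient conditions for membership in the Apéry set, with `n = 2k+5`. -/
lemma mem_Ap_of (k s : ℕ)
    (hmem : ∃ a b c : ℕ, s = a*(2*k+5)+b*(6*k+13)+c*(6*k+14))
    (hnot : ∀ a b c : ℕ, a*(2*k+5)+b*(6*k+13)+c*(6*k+14) + (6*k^2+23*k+22) ≠ s)
    (hnF : (6*k^2+23*k+22) + (6*k^2+23*k+22) ≠ s) :
    s ∈ Ap (2*k+5) := by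
  have e1 : 3*(2*k+5)-2 = 6*k+13 := by omega
  have e2 : 3*(2*k+5)-1 = 6*k+14 := by omega
  constructor
  · left
    obtain ⟨a,b,c,hab⟩ := hmem
    exact ⟨a,b,c, by rw [e1, e2]; exact hab⟩
  · rintro ⟨t, ht, hts⟩
    rw [FT_val] at hts
    cases ht with
    | inl htT =>
        obtain ⟨a,b,c,rfl⟩ := htT
        rw [e1, e2] at hts
        exact hnot a b c hts
    | inr htF =>
        rw [Set.mem_singleton_iff] at htF
        subst htF
        rw [FT_val] at hts
        exact hnF hts

/-- Four distinguished elements belong to `Ap(S, F(T))` (the fourth requires `n ≥ 7`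
for its coordinate `(n-7)/2` to be nonnegative). -/
theorem stmt4 (n : ℕ) (hodd : Odd n) (hn : 5 ≤ n) :
    ((3 * n - 3) / 2) * n + ((n - 3) / 2) * (3 * n - 2) ∈ Ap n ∧
    n + ((n - 1) / 2) * (3 * n - 2) ∈ Ap n ∧
    ((3 * n - 5) / 2) * n + ((n - 5) / 2) * (3 * n - 2) + (3 * n - 1) ∈ Ap n ∧
    (7 ≤ n → ((3 * n - 3) / 2) * n + ((n - 7) / 2) * (3 * n - 2) + (3 * n - 1) ∈ Ap n) := by
  obtain ⟨j, hj⟩ := hodd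
  obtain ⟨k, rfl⟩ : ∃ k, n = 2*k+5 := ⟨(n-5)/2, by omega⟩
  have e1 : 3*(2*k+5)-2 = 6*k+13 := by omega
  have e2 : 3*(2*k+5)-1 = 6*k+14 := by omega
  refine ⟨?_, ?_, ?_, ?_⟩
  · -- s₁ = 12k²+46k+43
    have g1 : (3*(2*k+5)-3)/2 = 3*k+6 := by omega
    have g2 : (2*k+5-3)/2 = k+1 := by omega
    rw [g1, g2, e1]
    have hv : (3*k+6)*(2*k+5)+(k+1)*(6*k+13) = 12*k^2+46*k+43 := by ring
    rw [hv]
    apply mem_Ap_of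
    · exact ⟨3*k+6, k+1, 0, by ring⟩
    · intro a b c hcon
      have hz : (a:ℤ)*(2*k+5)+b*(6*k+13)+c*(6*k+14) = 6*(k:ℤ)^2+23*k+21 := by
        have := congrArg (fun x : ℕ => (x : ℤ)) hcon
        push_cast at this
        linarith
      exact auxd1 k a b c (by positivity) (by positivity) (by positivity) (by positivity) hz
    · intro hcon
      nlinarith
  · -- s₂ = 6k²+27k+31
    have g2 : (2*k+5-1)/2 = k+2 := by omega
    rw [g2, e1]
    have hv : (2*k+5)+(k+2)*(6*k+13) = 6*k^2+27*k+31 := by ring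
    rw [hv]
    apply mem_Ap_of
    · exact ⟨1, k+2, 0, by ring⟩
    · intro a b c hcon
      have hz : (a:ℤ)*(2*k+5)+b*(6*k+13)+c*(6*k+14) = 4*(k:ℤ)+9 := by
        have := congrArg (fun x : ℕ => (x : ℤ)) hcon
        push_cast at this
        linarith
      exact auxd2 k a b c (by positivity) (by positivity) (by positivity) (by positivity) hz
    · intro hcon
      nlinarith
  · -- s₃ = 12k²+44k+39
    have g1 : (3*(2*k+5)-5)/2 = 3*k+5 := by omega
    have g2 : (2*k+5-5)/2 = k := by omega
    rw [g1, g2, e1, e2]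
    have hv : (3*k+5)*(2*k+5)+k*(6*k+13)+(6*k+14) = 12*k^2+44*k+39 := by ring
    rw [hv]
    apply mem_Ap_of
    · exact ⟨3*k+5, k, 1, by ring⟩
    · intro a b c hcon
      have hz : (a:ℤ)*(2*k+5)+b*(6*k+13)+c*(6*k+14) = 6*(k:ℤ)^2+21*k+17 := by
        have := congrArg (fun x : ℕ => (x : ℤ)) hcon
        push_cast at this
        linarith
      exact auxd3 k a b c (by positivity) (by positivity) (by positivity) (by positivity) hz
    · intro hcon
      nlinarith
  · -- s₄ = 12k²+40k+31, needs k ≥ 1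
    intro hk7
    obtain ⟨m, rfl⟩ : ∃ m, k = m+1 := ⟨k-1, by omega⟩
    have g1 : (3*(2*(m+1)+5)-3)/2 = 3*m+9 := by omega
    have g2 : (2*(m+1)+5-7)/2 = m := by omega
    rw [g1, g2, e1, e2]
    have hv : (3*m+9)*(2*(m+1)+5)+m*(6*(m+1)+13)+(6*(m+1)+14) = 12*(m+1)^2+40*(m+1)+31 := by
      ring
    rw [hv]
    apply mem_Ap_of
    · exact ⟨3*m+9, m, 1, by ring⟩
    · intro a b c hcon
      have hz : (a:ℤ)*(2*(m+1)+5)+b*(6*(m+1)+13)+c*(6*(m+1)+14)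
          = 6*((m:ℤ)+1)^2+17*((m:ℤ)+1)+9 := by
        have := congrArg (fun x : ℕ => (x : ℤ)) hcon
        push_cast at this
        ring_nf
        ring_nf at this
        linarith
      exact auxd4 (m+1) a b c (by positivity) (by positivity) (by positivity) (by positivity)
        (by linarith [hz])
    · intro hcon
      nlinarith
end

section
/- Let n be an odd integer with n ≥ 5, T = {an + b(3n−2) + c(3n−1) : a,b,c ∈ ℕ}, F(T) = n(3n−7)/2 + 2, and S = T ∪ {F(T)}. Define F ⊆ ℕ³ as the union of F₁ = {(x,y,0) : x ≤ (3n−3)/2, y ≤ (n−3)/2}, F₂ = {(x,y,0) : x ≤ 1, y = (n−1)/2}, F₃ = {(x,y,1) : x ≤ (3n−3)/2, y ≤ (n−7)/2}, F₄ = {(x,y,1) : x ≤ (3n−5)/2, y = (n−5)/2}. Then the map (x,y,z) ↦ xn + y(3n−2) + z(3n−1) is a bijection from F onto Ap(S, F(T)). -/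
lemma helperZ (N A B r r' : ℤ) (h : A * N + r = B * N + r')
    (hr1 : 0 ≤ r) (hr2 : r < 2 * N) (hr'1 : 0 ≤ r') (hr'2 : r' < N) :
    (B = A ∧ r = r') ∨ (B = A + 1 ∧ r = r' + N) := by
  have hN : 0 < N := by linarith
  have hd : (B - A) * N = r - r' := by linear_combination -h
  have h0 : 0 ≤ B - A := by
    by_contra h'
    push_neg at h'
    have h1 : B - A ≤ -1 := by linarith
    have h2 : (B - A) * N ≤ (-1) * N := mul_le_mul_of_nonneg_right h1 hN.le
    linarith
  have h1 : B - A ≤ 1 := by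
    by_contra h'
    push_neg at h'
    have h1 : 2 ≤ B - A := by linarith
    have h2 : 2 * N ≤ (B - A) * N := mul_le_mul_of_nonneg_right h1 hN.le
    linarith
  have hcase : B - A = 0 ∨ B - A = 1 := by omega
  rcases hcase with h' | h'
  · left
    constructor
    · linarith
    · rw [h'] at hd; simp at hd; linarith
  · right
    constructor
    · linarith
    · rw [h'] at hd; simp at hd; linarith

lemma NFaux (u : ℕ) : ∀ k a b c : ℕ, b + c ≤ k → ∃ x y z : ℕ,
    x * (2*u+5) + y * (6*u+13) + z * (6*u+14)
      = a * (2*u+5) + b * (6*u+13) + c * (6*u+14) ∧ z ≤ 1 ∧ 2*y + z ≤ 2*u+4 := by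
  intro k
  induction k with
  | zero =>
    intro a b c h
    have hb : b = 0 := by omega
    have hc : c = 0 := by omega
    exact ⟨a, 0, 0, by rw [hb, hc], by omega, by omega⟩
  | succ k ih =>
    intro a b c h
    by_cases hc2 : 2 ≤ c
    · obtain ⟨c', rfl⟩ : ∃ c', c = c' + 2 := ⟨c - 2, by omega⟩
      obtain ⟨x, y, z, he, h1, h2⟩ := ih (a+3) (b+1) c' (by omega)
      exact ⟨x, y, z, by rw [he]; ring, h1, h2⟩
    · by_cases hb2 : u + 3 ≤ b
      · obtain ⟨b', rfl⟩ : ∃ b', b = b' + (u+3) := ⟨b - (u+3), by omega⟩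
        obtain ⟨x, y, z, he, h1, h2⟩ := ih (a+3*u+5) b' (c+1) (by omega)
        exact ⟨x, y, z, by rw [he]; ring, h1, h2⟩
      · by_cases hbc : b = u + 2 ∧ c = 1
        · obtain ⟨hb, hc⟩ := hbc
          subst hb; subst hc
          exact ⟨a + 3*u+8, 0, 0, by ring, by omega, by omega⟩
        · exact ⟨a, b, c, rfl, by omega, by omega⟩

/-- The map `(x,y,z) ↦ xn + y(3n-2) + z(3n-1)` is a bijection from `F` onto
`Ap(S, F(T))`. -/
theorem stmt5 (n : ℕ) (hodd : Odd n) (hn : 5 ≤ n) :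
    Set.BijOn (phi n) (Fset n) (Ap n) := by
  obtain ⟨m, hm⟩ := hodd
  obtain ⟨u, rfl⟩ : ∃ u, n = 2*u+5 := ⟨m - 2, by omega⟩
  have h31 : 3 * (2*u+5) - 2 = 6*u+13 := by omega
  have h32 : 3 * (2*u+5) - 1 = 6*u+14 := by omega
  have hFT : FT (2*u+5) = 6*u*u + 23*u + 22 := by
    unfold FT
    have h7 : 3*(2*u+5) - 7 = 6*u+8 := by omega
    rw [h7]
    have h8 : (2*u+5) * (6*u+8) = 2 * (6*u*u + 23*u + 20) := by ring
    rw [h8, Nat.mul_div_cancel_left _ (by norm_num : 0 < 2)]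
  have hT : ∀ s : ℕ, s ∈ Tset (2*u+5) ↔
      ∃ a b c : ℕ, s = a*(2*u+5) + b*(6*u+13) + c*(6*u+14) := by
    intro s
    simp only [Tset, Set.mem_setOf_eq, h31, h32]
  have hS : ∀ t : ℕ, t ∈ Sset (2*u+5) ↔ (t ∈ Tset (2*u+5) ∨ t = FT (2*u+5)) := by
    intro t
    simp only [Sset, Set.mem_union, Set.mem_singleton_iff]
  have hphi : ∀ x y z : ℕ,
      phi (2*u+5) (x, y, z) = x*(2*u+5) + y*(6*u+13) + z*(6*u+14) := by
    intro x y z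
    show x * (2*u+5) + y * (3*(2*u+5)-2) + z * (3*(2*u+5)-1) = _
    rw [h31, h32]
  have hFs : ∀ x y z : ℕ, (x, y, z) ∈ Fset (2*u+5) ↔
      ((z = 0 ∧ x ≤ 3*u+6 ∧ y ≤ u+1) ∨ (z = 0 ∧ x ≤ 1 ∧ y = u+2) ∨
       (z = 1 ∧ x ≤ 3*u+6 ∧ 2*y+7 ≤ 2*u+5) ∨ (z = 1 ∧ x ≤ 3*u+5 ∧ y = u)) := by
    intro x y z
    simp only [Fset, Set.mem_union, Set.mem_setOf_eq]
    omega
  have mapsTo : Set.MapsTo (phi (2*u+5)) (Fset (2*u+5)) (Ap (2*u+5)) := by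
    rintro ⟨x, y, z⟩ hp
    rw [hFs] at hp
    rw [hphi]
    simp only [Ap, Set.mem_setOf_eq]
    refine ⟨(hS _).2 (Or.inl ((hT _).2 ⟨x, y, z, rfl⟩)), ?_⟩
    rintro ⟨t, ht, hteq⟩
    rw [hS] at ht
    rcases ht with htT | htF
    · rw [hT] at htT
      obtain ⟨a, b, c, rfl⟩ := htT
      obtain ⟨a0, b0, c0, hrep, hc0, hbc0⟩ := NFaux u (b+c) a b c le_rfl
      rw [← hrep, hFT] at hteq
      have hZ := congrArg (fun t : ℕ => (t : ℤ)) hteq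
      push_cast at hZ
      have key : ((a0:ℤ) + 3*b0 + 3*c0 + 3*u + 4) * (2*(u:ℤ)+5) + (2 + 2*y + z)
          = ((x:ℤ) + 3*y + 3*z) * (2*(u:ℤ)+5) + (2*b0 + c0) := by
        linear_combination hZ
      rcases helperZ _ _ _ _ _ key (by positivity) (by omega)
        (by positivity) (by omega) with ⟨h1, h2⟩ | ⟨h1, h2⟩ <;> omega
    · rw [htF, hFT] at hteq
      have hZ := congrArg (fun t : ℕ => (t : ℤ)) hteq
      push_cast at hZ
      have key : ((6:ℤ)*u + 8) * (2*(u:ℤ)+5) + (4 + 2*y + z)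
          = ((x:ℤ) + 3*y + 3*z) * (2*(u:ℤ)+5) + 0 := by
        linear_combination hZ
      rcases helperZ _ _ _ _ _ key (by positivity) (by omega)
        (by norm_num) (by omega) with ⟨h1, h2⟩ | ⟨h1, h2⟩ <;> omega
  have injOn : Set.InjOn (phi (2*u+5)) (Fset (2*u+5)) := by
    rintro ⟨x, y, z⟩ hp ⟨x', y', z'⟩ hq heq
    rw [hFs] at hp hq
    rw [hphi x y z, hphi x' y' z'] at heq
    have hZ := congrArg (fun t : ℕ => (t : ℤ)) heq
    push_cast at hZ
    have key : ((x:ℤ) + 3*y + 3*z) * (2*(u:ℤ)+5) + (2*y' + z')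
        = ((x':ℤ) + 3*y' + 3*z') * (2*(u:ℤ)+5) + (2*y + z) := by
      linear_combination hZ
    rcases helperZ _ _ _ _ _ key (by positivity) (by omega)
      (by positivity) (by omega) with ⟨h1, h2⟩ | ⟨h1, h2⟩
    · have hx : x = x' ∧ y = y' ∧ z = z' := by omega
      obtain ⟨rfl, rfl, rfl⟩ := hx
      rfl
    · exfalso; omega
  have surjOn : Set.SurjOn (phi (2*u+5)) (Fset (2*u+5)) (Ap (2*u+5)) := by
    intro s hs
    simp only [Ap, Set.mem_setOf_eq] at hs
    obtain ⟨hsS, hsnot⟩ := hs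
    rw [hS] at hsS
    rcases hsS with hsT | rfl
    · rw [hT] at hsT
      obtain ⟨a, b, c, rfl⟩ := hsT
      obtain ⟨x, y, z, hrep, hz, hyz⟩ := NFaux u (b+c) a b c le_rfl
      by_cases hmem : (3*u+7 ≤ x) ∨ (z = 0 ∧ y = u+2 ∧ 2 ≤ x) ∨ (z = 1 ∧ y = u+1) ∨
          (z = 1 ∧ y = u ∧ x = 3*u+6)
      · exfalso
        apply hsnot
        rcases hmem with hx7 | ⟨hz0, hy, hx2⟩ | ⟨hz1, hy⟩ | ⟨hz1, hy, hx⟩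
        · obtain ⟨x', rfl⟩ : ∃ x', x = x' + (3*u+7) := ⟨x - (3*u+7), by omega⟩
          refine ⟨x'*(2*u+5) + (y+1)*(6*u+13) + z*(6*u+14),
            (hS _).2 (Or.inl ((hT _).2 ⟨x', y+1, z, rfl⟩)), ?_⟩
          rw [hFT, ← hrep]; ring
        · subst hz0; subst hy
          obtain ⟨x', rfl⟩ : ∃ x', x = x' + 2 := ⟨x - 2, by omega⟩
          refine ⟨x'*(2*u+5) + 0*(6*u+13) + 1*(6*u+14),
            (hS _).2 (Or.inl ((hT _).2 ⟨x', 0, 1, rfl⟩)), ?_⟩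
          rw [hFT, ← hrep]; ring
        · subst hz1; subst hy
          refine ⟨(x+1)*(2*u+5) + 0*(6*u+13) + 0*(6*u+14),
            (hS _).2 (Or.inl ((hT _).2 ⟨x+1, 0, 0, rfl⟩)), ?_⟩
          rw [hFT, ← hrep]; ring
        · subst hz1; subst hx
          rw [hy] at hrep
          refine ⟨FT (2*u+5), (hS _).2 (Or.inr rfl), ?_⟩
          rw [hFT, ← hrep]; ring
      · refine ⟨(x, y, z), ?_, ?_⟩
        · rw [hFs]; omega
        · rw [hphi]; exact hrep
    · exfalso
      exact hsnot ⟨0, (hS _).2 (Or.inl ((hT _).2 ⟨0, 0, 0, by simp⟩)), by simp⟩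
  exact ⟨mapsTo, injOn, surjOn⟩
end

section
/- Let n be an odd integer with n ≥ 5, T = {an + b(3n−2) + c(3n−1) : a,b,c ∈ ℕ}, F(T) = n(3n−7)/2 + 2, S = T ∪ {F(T)}, and let F ⊆ ℕ³ be the union of F₁ = {(x,y,0) : x ≤ (3n−3)/2, y ≤ (n−3)/2}, F₂ = {(x,y,0) : x ≤ 1, y = (n−1)/2}, F₃ = {(x,y,1) : x ≤ (3n−3)/2, y ≤ (n−7)/2}, F₄ = {(x,y,1) : x ≤ (3n−5)/2, y = (n−5)/2}. Then F is an L-shape associated to Ap(S, F(T)): the map (x,y,z) ↦ xn + y(3n−2) + z(3n−1) is a bijection from F onto Ap(S, F(T)), and F is downward closed under the componentwise order on ℕ³. -/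
/-- Uniqueness of normal forms (with possibly negative `x`-coefficients). -/
lemma key (k : ℕ) (hk : 2 ≤ k) (x x' : ℤ) (y z y' z' : ℕ)
    (hz : z ≤ 1) (hz' : z' ≤ 1) (hy : 2*y + z ≤ 2*k) (hy' : 2*y' + z' ≤ 2*k)
    (h : x*(2*(k:ℤ)+1) + y*(6*(k:ℤ)+1) + z*(6*(k:ℤ)+2)
       = x'*(2*(k:ℤ)+1) + y'*(6*(k:ℤ)+1) + z'*(6*(k:ℤ)+2)) :
    x = x' ∧ y = y' ∧ z = z' := by
  have hd : (2*(y:ℤ)+z) - (2*(y':ℤ)+z')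
      = (x - x' + 3*((y:ℤ)+z) - 3*((y':ℤ)+z')) * (2*(k:ℤ)+1) := by
    linear_combination -h
  set d : ℤ := x - x' + 3*((y:ℤ)+z) - 3*((y':ℤ)+z') with hder
  have h1 : d = 0 := by
    rcases lt_trichotomy d 0 with h'|h'|h'
    · have h2 : d ≤ -1 := by omega
      have h3 : d*(2*(k:ℤ)+1) ≤ (-1)*(2*(k:ℤ)+1) := by
        apply mul_le_mul_of_nonneg_right h2; positivity
      have hy2 : 2*(y:ℤ) + z ≤ 2*k := by exact_mod_cast hy
      have hy2' : 2*(y':ℤ) + z' ≤ 2*k := by exact_mod_cast hy'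
      have : (0:ℤ) ≤ 2*(y:ℤ)+z := by positivity
      linarith
    · exact h'
    · have h2 : 1 ≤ d := by omega
      have h3 : (1:ℤ)*(2*(k:ℤ)+1) ≤ d*(2*(k:ℤ)+1) := by
        apply mul_le_mul_of_nonneg_right h2; positivity
      have hy2 : 2*(y:ℤ) + z ≤ 2*k := by exact_mod_cast hy
      have : (0:ℤ) ≤ 2*(y':ℤ)+z' := by positivity
      linarith
  rw [h1, zero_mul] at hd
  have hyz : y = y' ∧ z = z' := by omega
  obtain ⟨rfl, rfl⟩ := hyz
  refine ⟨?_, rfl, rfl⟩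
  have h4 : (x - x') * (2*(k:ℤ)+1) = 0 := by linear_combination h
  rcases mul_eq_zero.mp h4 with h5 | h5
  · omega
  · omega

/-- Every factorization can be brought into normal form. -/
lemma nf_ex_aux (k : ℕ) (hk : 2 ≤ k) :
    ∀ N a b c : ℕ, b + c ≤ N → ∃ x y z : ℕ, z ≤ 1 ∧ 2*y + z ≤ 2*k ∧
      x*(2*k+1) + y*(6*k+1) + z*(6*k+2) = a*(2*k+1) + b*(6*k+1) + c*(6*k+2) := by
  intro N
  induction N with
  | zero =>
    intro a b c hbc
    have hb : b = 0 := by omega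
    have hc : c = 0 := by omega
    exact ⟨a, 0, 0, by omega, by omega, by subst hb hc; ring⟩
  | succ N ih =>
    intro a b c hbc
    by_cases hc2 : 2 ≤ c
    · obtain ⟨c', rfl⟩ : ∃ c', c = c' + 2 := ⟨c - 2, by omega⟩
      obtain ⟨x, y, z, h1, h2, h3⟩ := ih (a+3) (b+1) c' (by omega)
      exact ⟨x, y, z, h1, h2, by rw [h3]; ring⟩
    · by_cases hnf : 2*b + c ≤ 2*k
      · exact ⟨a, b, c, by omega, hnf, rfl⟩
      · rcases (by omega : c = 0 ∨ c = 1) with rfl | rfl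
        · obtain ⟨b', rfl⟩ : ∃ b', b = b' + (k+1) := ⟨b - (k+1), by omega⟩
          obtain ⟨x, y, z, h1, h2, h3⟩ := ih (a+3*k-1) b' 1 (by omega)
          refine ⟨x, y, z, h1, h2, ?_⟩
          rw [h3]
          obtain ⟨j, rfl⟩ : ∃ j, k = j + 2 := ⟨k - 2, by omega⟩
          have hj : a + 3*(j+2) - 1 = a + 3*j + 5 := by omega
          rw [hj]; ring
        · obtain ⟨b', rfl⟩ : ∃ b', b = b' + k := ⟨b - k, by omega⟩
          obtain ⟨x, y, z, h1, h2, h3⟩ := ih (a+3*k+2) b' 0 (by omega)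
          exact ⟨x, y, z, h1, h2, by rw [h3]; ring⟩

/-- Value of the Frobenius number in terms of `k` where `n = 2k+1`. -/
lemma FT_eq_s6 (k : ℕ) (hk : 2 ≤ k) : FT (2*k+1) = 6*k*k - k := by
  obtain ⟨j, rfl⟩ : ∃ j, k = j + 2 := ⟨k-2, by omega⟩
  show (2*(j+2)+1) * (3*(2*(j+2)+1) - 7) / 2 + 2 = 6*(j+2)*(j+2) - (j+2)
  have h1 : 3*(2*(j+2)+1) - 7 = 6*j+8 := by omega
  rw [h1]
  have h2 : (2*(j+2)+1) * (6*j+8) = (6*j*j + 23*j + 20) * 2 := by ring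
  rw [h2, Nat.mul_div_cancel _ (by norm_num : 0 < 2)]
  have h3 : 6*(j+2)*(j+2) = 6*j*j + 24*j + 24 := by ring
  rw [h3]
  set J := j*j with hJ
  omega

/-- `F` is an L-shape associated to `Ap(S, F(T))`: `phi` restricts to a bijection from
`F` onto the Apéry set, and `F` is downward closed. -/
theorem stmt6 (n : ℕ) (hodd : Odd n) (hn : 5 ≤ n) :
    Set.BijOn (phi n) (Fset n) (Ap n) ∧
    ∀ u ∈ Fset n, ∀ v : ℕ × ℕ × ℕ, v ≤ u → v ∈ Fset n := by
  obtain ⟨k, hn2⟩ := hodd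
  have hn2' : n = 2*k+1 := by omega
  clear hn2
  subst hn2'
  have hk : 2 ≤ k := by omega
  have hg1 : 3*(2*k+1) - 2 = 6*k+1 := by omega
  have hg2 : 3*(2*k+1) - 1 = 6*k+2 := by omega
  have hFT : FT (2*k+1) = 6*k*k - k := FT_eq_s6 k hk
  have hkk : k ≤ 6*k*k := by nlinarith
  have phiv : ∀ x y z : ℕ, phi (2*k+1) (x,y,z) = x*(2*k+1)+y*(6*k+1)+z*(6*k+2) := by
    intro x y z
    show x*(2*k+1) + y*(3*(2*k+1)-2) + z*(3*(2*k+1)-1) = _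
    rw [hg1, hg2]
  have memTof : ∀ a b c : ℕ, a*(2*k+1)+b*(6*k+1)+c*(6*k+2) ∈ Tset (2*k+1) := by
    intro a b c
    exact ⟨a, b, c, by rw [hg1, hg2]⟩
  have memT : ∀ s : ℕ, s ∈ Tset (2*k+1) ↔
      ∃ x y z : ℕ, z ≤ 1 ∧ 2*y + z ≤ 2*k ∧ s = x*(2*k+1)+y*(6*k+1)+z*(6*k+2) := by
    intro s
    constructor
    · rintro ⟨a, b, c, rfl⟩
      rw [hg1, hg2]
      obtain ⟨x, y, z, h1, h2, h3⟩ := nf_ex_aux k hk (b+c) a b c le_rfl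
      exact ⟨x, y, z, h1, h2, h3.symm⟩
    · rintro ⟨x, y, z, -, -, rfl⟩
      exact memTof x y z
  have memAp : ∀ s : ℕ, s ∈ Ap (2*k+1) ↔
      (s ∈ Tset (2*k+1) ∨ s = FT (2*k+1)) ∧
      ¬ ∃ t, (t ∈ Tset (2*k+1) ∨ t = FT (2*k+1)) ∧ t + FT (2*k+1) = s := by
    intro s
    simp only [Ap, Sset, Set.mem_setOf_eq, Set.mem_union, Set.mem_singleton_iff]
  have memF : ∀ x y z : ℕ, ((x,y,z) ∈ Fset (2*k+1) ↔
      (z = 0 ∧ x ≤ 3*k ∧ y+1 ≤ k) ∨ (z = 0 ∧ x ≤ 1 ∧ y = k) ∨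
      (z = 1 ∧ x ≤ 3*k ∧ y+3 ≤ k) ∨ (z = 1 ∧ x+1 ≤ 3*k ∧ y+2 = k)) := by
    intro x y z
    simp only [Fset, Set.mem_union, Set.mem_setOf_eq]
    omega
  have hmaps : Set.MapsTo (phi (2*k+1)) (Fset (2*k+1)) (Ap (2*k+1)) := by
    rintro ⟨x, y, z⟩ hp
    rw [memF] at hp
    have hz : z ≤ 1 := by omega
    have hyz : 2*y + z ≤ 2*k := by omega
    rw [memAp]
    constructor
    · exact Or.inl (by rw [phiv]; exact memTof x y z)
    · rintro ⟨t, ht, heq⟩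
      rw [phiv] at heq
      rcases ht with ht | rfl
      · rw [memT] at ht
        obtain ⟨a, b, c, hc1, hc2, rfl⟩ := ht
        rw [hFT] at heq
        zify [hkk] at heq
        interval_cases c
        · rcases Nat.eq_zero_or_pos b with rfl | hb
          · obtain ⟨j, rfl⟩ : ∃ j, k = j + 2 := ⟨k-2, by omega⟩
            obtain ⟨-, hy', hz'⟩ := key (j+2) hk ((a:ℤ)-1) x (j+1) 1 y z (by omega) hz
              (by omega) hyz (by push_cast at heq ⊢; linear_combination heq)
            omega
          · obtain ⟨b', rfl⟩ : ∃ b', b = b' + 1 := ⟨b-1, by omega⟩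
            obtain ⟨hx', hy', hz'⟩ := key k hk ((a:ℤ)+3*k+1) x b' 0 y z (by omega) hz
              (by omega) hyz (by push_cast at heq ⊢; linear_combination heq)
            have hxv : x = a + 3*k + 1 := by exact_mod_cast hx'.symm
            omega
        · rcases Nat.eq_zero_or_pos b with rfl | hb
          · obtain ⟨hx', hy', hz'⟩ := key k hk ((a:ℤ)+2) x k 0 y z (by omega) hz
              (by omega) hyz (by push_cast at heq ⊢; linear_combination heq)
            have hxv : x = a + 2 := by exact_mod_cast hx'.symm
            omega
          · obtain ⟨b', rfl⟩ : ∃ b', b = b' + 1 := ⟨b-1, by omega⟩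
            obtain ⟨hx', hy', hz'⟩ := key k hk ((a:ℤ)+3*k+1) x b' 1 y z (by omega) hz
              (by omega) hyz (by push_cast at heq ⊢; linear_combination heq)
            have hxv : x = a + 3*k + 1 := by exact_mod_cast hx'.symm
            omega
      · rw [hFT] at heq
        zify [hkk] at heq
        obtain ⟨j, rfl⟩ : ∃ j, k = j + 2 := ⟨k-2, by omega⟩
        obtain ⟨hx', hy', hz'⟩ := key (j+2) hk (3*(j:ℤ)+6) x j 1 y z (by omega) hz
          (by omega) hyz (by push_cast at heq ⊢; linear_combination heq)
        have hxv : x = 3*j+6 := by exact_mod_cast hx'.symm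
        omega
  have hinj : Set.InjOn (phi (2*k+1)) (Fset (2*k+1)) := by
    rintro ⟨x, y, z⟩ hp ⟨x', y', z'⟩ hq heq
    rw [memF] at hp hq
    rw [phiv, phiv] at heq
    zify at heq
    obtain ⟨h1, h2, h3⟩ := key k hk (x:ℤ) (x':ℤ) y z y' z' (by omega) (by omega)
      (by omega) (by omega) (by push_cast at heq ⊢; linear_combination heq)
    have hx : x = x' := by exact_mod_cast h1
    subst hx h2 h3
    rfl
  have hsurj : Set.SurjOn (phi (2*k+1)) (Fset (2*k+1)) (Ap (2*k+1)) := by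
    intro s hs
    rw [memAp] at hs
    obtain ⟨hsS, hsnot⟩ := hs
    rcases hsS with hsT | rfl
    · rw [memT] at hsT
      obtain ⟨x, y, z, hz, hyz, rfl⟩ := hsT
      by_cases hmem : (x,y,z) ∈ Fset (2*k+1)
      · exact ⟨(x,y,z), hmem, phiv x y z⟩
      · exfalso
        apply hsnot
        rw [memF] at hmem
        have hcase : (3*k+1 ≤ x) ∨ (z = 0 ∧ y = k ∧ 2 ≤ x) ∨
            (z = 1 ∧ y + 1 = k) ∨ (z = 1 ∧ y + 2 = k ∧ x = 3*k) := by omega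
        rcases hcase with hc | ⟨rfl, rfl, hx0⟩ | ⟨rfl, hy1⟩ | ⟨rfl, hy1, rfl⟩
        · obtain ⟨x'', rfl⟩ : ∃ x'', x = x'' + (3*k+1) := ⟨x - (3*k+1), by omega⟩
          refine ⟨x''*(2*k+1)+(y+1)*(6*k+1)+z*(6*k+2), Or.inl (memTof x'' (y+1) z), ?_⟩
          rw [hFT]
          zify [hkk]
          push_cast
          ring
        · obtain ⟨x'', rfl⟩ : ∃ x'', x = x'' + 2 := ⟨x - 2, by omega⟩
          refine ⟨x''*(2*y+1)+0*(6*y+1)+1*(6*y+2), Or.inl (memTof x'' 0 1), ?_⟩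
          rw [hFT]
          zify [hkk]
          push_cast
          ring
        · subst hy1
          refine ⟨(x+1)*(2*(y+1)+1)+0*(6*(y+1)+1)+0*(6*(y+1)+2),
            Or.inl (memTof (x+1) 0 0), ?_⟩
          rw [hFT]
          zify [hkk]
          push_cast
          ring
        · subst hy1
          refine ⟨FT (2*(y+2)+1), Or.inr rfl, ?_⟩
          rw [hFT]
          zify [hkk]
          push_cast
          ring
    · exact absurd ⟨0, Or.inl ⟨0, 0, 0, by simp⟩, by omega⟩ hsnot
  refine ⟨⟨hmaps, hinj, hsurj⟩, ?_⟩
  rintro ⟨x, y, z⟩ hu ⟨x', y', z'⟩ hv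
  rw [memF] at hu ⊢
  simp only [Prod.mk_le_mk] at hv
  omega
end

section
/- Let n be an odd integer with n ≥ 5, T = {an + b(3n−2) + c(3n−1) : a,b,c ∈ ℕ}, F(T) = n(3n−7)/2 + 2, and S = T ∪ {F(T)}. Then exactly 6n − 13 elements of Ap(S, F(T)) have a unique factorization, i.e. #{s ∈ Ap(S, F(T)) : #Z(s) = 1} = 6n − 13. -/
lemma phi_eval_s8 (m x y z : ℕ) :
    phi (2*m+1) (x,y,z) = x*(2*m+1) + y*(6*m+1) + z*(6*m+2) := by
  simp only [phi]
  rw [show 3*(2*m+1) - 2 = 6*m+1 from by omega, show 3*(2*m+1) - 1 = 6*m+2 from by omega]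

lemma FT_cast (m : ℕ) (hm : 2 ≤ m) : (FT (2*m+1) : ℤ) = 6*m^2 - m := by
  obtain ⟨M, rfl⟩ : ∃ M, m = M + 2 := ⟨m - 2, by omega⟩
  simp only [FT]
  rw [show 3*(2*(M+2)+1) - 7 = 2*(3*M+4) from by omega]
  rw [show (2*(M+2)+1) * (2*(3*M+4)) = 2*((2*(M+2)+1)*(3*M+4)) from by ring]
  rw [Nat.mul_div_cancel_left _ (by norm_num : 0 < 2)]
  push_cast; ring

lemma phi_cast (m : ℕ) (p : ℕ × ℕ × ℕ) :
    (phi (2*m+1) p : ℤ) = p.1 * (2*m+1) + p.2.1 * (6*m+1) + p.2.2 * (6*m+2) := by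
  obtain ⟨x,y,z⟩ := p
  rw [phi_eval_s8]; push_cast; ring

lemma diff_lemma (m : ℕ) (x y z u v w : ℕ)
    (h : phi (2*m+1) (u,v,w) = phi (2*m+1) (x,y,z)) :
    ∃ a b : ℤ, 2*(u:ℤ) = 2*x + 6*a - (6*m-2)*b ∧
      2*(v:ℤ) = 2*y + 2*a + (2*m+2)*b ∧ (w:ℤ) = z - 2*a - b := by
  have h' : (u:ℤ)*(2*m+1) + v*(6*m+1) + w*(6*m+2)
      = x*(2*m+1) + y*(6*m+1) + z*(6*m+2) := by
    have h1 := congrArg (fun t : ℕ => (t:ℤ)) h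
    rw [phi_cast m, phi_cast m] at h1
    simpa using h1
  set b : ℤ := (u:ℤ) - x + 3*((v:ℤ)-y) + 3*((w:ℤ)-z) with hbdef
  have hb : b*(2*m+1) = 2*((v:ℤ)-y) + ((w:ℤ)-z) := by
    rw [hbdef]; linear_combination h'
  obtain ⟨c, hc⟩ : ∃ c : ℤ, b - ((w:ℤ)-z) = 2*c :=
    ⟨(v:ℤ)-y - m*b, by linear_combination hb⟩
  refine ⟨(z:ℤ) - w - c, b, ?_, ?_, ?_⟩
  · linear_combination 3*hb - 2*hbdef - 3*hc
  · linear_combination -hb - hc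
  · linarith [hc]

lemma uniq_fac (m : ℕ) (hm : 2 ≤ m) (x y z : ℕ)
    (hz : z ≤ 1) (hy : y ≤ m) (hx : x ≤ 3*m)
    (hxy : x ≤ 2 ∨ y = 0) (hz1 : z = 1 → y + 2 ≤ m ∧ x + 2 ≤ 3*m) :
    Zfac (2*m+1) (phi (2*m+1) (x,y,z)) = {(x,y,z)} := by
  ext ⟨u,v,w⟩
  simp only [Zfac, Set.mem_setOf_eq, Set.mem_singleton_iff, Prod.mk.injEq]
  constructor
  · intro hq
    obtain ⟨a, b, hu, hv, hw⟩ := diff_lemma m x y z u v w hq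
    have hu0 : (0:ℤ) ≤ (u:ℤ) := Int.natCast_nonneg u
    have hv0 : (0:ℤ) ≤ (v:ℤ) := Int.natCast_nonneg v
    have hw0 : (0:ℤ) ≤ (w:ℤ) := Int.natCast_nonneg w
    have hmz : (2:ℤ) ≤ (m:ℤ) := by exact_mod_cast hm
    have hxz : (x:ℤ) ≤ 3*m := by exact_mod_cast hx
    have hyz : (y:ℤ) ≤ m := by exact_mod_cast hy
    have hzz : (z:ℤ) ≤ 1 := by exact_mod_cast hz
    have hb0 : b = 0 := by
      by_contra hb
      rcases lt_or_gt_of_ne hb with hbneg | hbpos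
      · -- b ≤ -1
        have h1 : b ≤ -1 := by omega
        have h2 : (2*(m:ℤ)+1)*b ≤ (2*(m:ℤ)+1)*(-1) :=
          mul_le_mul_of_nonneg_left h1 (by linarith)
        -- 2y ≥ -(2m+1)b - z ≥ 2m+1-z
        rcases Nat.eq_or_lt_of_le hz with hz' | hz'
        · -- z = 1
          have hy2 : (y:ℤ) + 2 ≤ m := by exact_mod_cast (hz1 (by omega)).1
          have hze : (z:ℤ) = 1 := by exact_mod_cast hz'
          linarith
        · have hze : (z:ℤ) = 0 := by
            have : z = 0 := by omega
            exact_mod_cast this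
          linarith
      · -- b ≥ 1
        have h1 : (1:ℤ) ≤ b := hbpos
        rcases Nat.eq_or_lt_of_le hz with hz' | hz'
        · -- z = 1
          have hx2 : (x:ℤ) + 2 ≤ 3*m := by exact_mod_cast (hz1 (by omega)).2
          have hze : (z:ℤ) = 1 := by exact_mod_cast hz'
          have h2 : (6*(m:ℤ)-2)*1 ≤ (6*(m:ℤ)-2)*b :=
            mul_le_mul_of_nonneg_left h1 (by linarith)
          -- from hw0: 2a ≤ 1 - b ≤ 0, so a ≤ 0
          have ha0 : a ≤ 0 := by linarith
          linarith
        · have hze : (z:ℤ) = 0 := by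
            have : z = 0 := by omega
            exact_mod_cast this
          have ha1 : a ≤ -1 := by linarith
          have h2 : (6*(m:ℤ)-2)*1 ≤ (6*(m:ℤ)-2)*b :=
            mul_le_mul_of_nonneg_left h1 (by linarith)
          linarith
    subst hb0
    have ha0 : a = 0 := by
      by_contra ha
      have ha1 : a ≤ -1 ∨ 1 ≤ a := by omega
      rcases ha1 with ha1 | ha1
      · -- x ≥ 3 and y ≥ 1
        have hx3 : (3:ℤ) ≤ x := by linarith
        have hy1 : (1:ℤ) ≤ y := by linarith
        rcases hxy with h | h
        · have : (x:ℤ) ≤ 2 := by exact_mod_cast h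
          linarith
        · have : (y:ℤ) = 0 := by exact_mod_cast h
          linarith
      · -- a ≥ 1 : w = z - 2a ≤ 1 - 2 < 0
        linarith
    subst ha0
    refine ⟨?_, ?_, ?_⟩ <;> omega
  · rintro ⟨rfl, rfl, rfl⟩; rfl

set_option maxHeartbeats 2000000 in
lemma mem_Ap (m : ℕ) (hm : 2 ≤ m) (x y z : ℕ)
    (hz : z ≤ 1) (hy : y ≤ m) (hx : x ≤ 3*m)
    (hxy : x ≤ 2 ∨ y = 0)
    (hym : y = m → z = 0 ∧ x ≤ 1)
    (hz1 : z = 1 → y + 2 ≤ m ∧ x + 2 ≤ 3*m) :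
    phi (2*m+1) (x,y,z) ∈ Ap (2*m+1) := by
  constructor
  · exact Or.inl ⟨x, y, z, rfl⟩
  · rintro ⟨t, htS, hteq⟩
    have hmz : (2:ℤ) ≤ (m:ℤ) := by exact_mod_cast hm
    have hxz : (x:ℤ) ≤ 3*m := by exact_mod_cast hx
    have hyz : (y:ℤ) ≤ m := by exact_mod_cast hy
    have hzz : (z:ℤ) ≤ 1 := by exact_mod_cast hz
    have hz0 : (0:ℤ) ≤ (z:ℤ) := Int.natCast_nonneg z
    have hy0 : (0:ℤ) ≤ (y:ℤ) := Int.natCast_nonneg y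
    have hx0 : (0:ℤ) ≤ (x:ℤ) := Int.natCast_nonneg x
    have hteqz : (t:ℤ) + (FT (2*m+1) : ℤ) = (phi (2*m+1) (x,y,z) : ℤ) := by
      exact_mod_cast congrArg (fun k : ℕ => (k:ℤ)) hteq
    rw [FT_cast m hm, phi_cast m] at hteqz
    simp only at hteqz
    -- bound on phi: ≤ 6m² + 5m
    have hbound : (x:ℤ)*(2*m+1) + y*(6*m+1) + z*(6*m+2) ≤ 6*(m:ℤ)^2 + 5*m := by
      have hzsplit : (z:ℤ) = 0 ∨ ((z:ℤ) = 1 ∧ (y:ℤ) + 2 ≤ m ∧ (x:ℤ) + 2 ≤ 3*m) := by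
        rcases Nat.eq_or_lt_of_le hz with hz' | hz'
        · obtain ⟨h1, h2⟩ := hz1 hz'
          exact Or.inr ⟨by exact_mod_cast hz', by exact_mod_cast h1, by exact_mod_cast h2⟩
        · exact Or.inl (by exact_mod_cast (by omega : z = 0))
      have hxysplit : (x:ℤ) ≤ 2 ∨ (y:ℤ) = 0 := by
        rcases hxy with h | h
        · exact Or.inl (by exact_mod_cast h)
        · exact Or.inr (by exact_mod_cast h)
      rcases hzsplit with hze | ⟨hze, h1z, h2z⟩
      · rcases hxysplit with hxe | hye
        · rcases Nat.eq_or_lt_of_le hy with hy' | hy'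
          · have hx1 : (x:ℤ) ≤ 1 := by exact_mod_cast (hym hy').2
            have hye : (y:ℤ) = m := by exact_mod_cast hy'
            nlinarith
          · have hyz' : (y:ℤ) + 1 ≤ m := by exact_mod_cast (hy' : y + 1 ≤ m)
            nlinarith [mul_le_mul_of_nonneg_right hyz' (by linarith : (0:ℤ) ≤ 6*m+1)]
        · nlinarith [mul_le_mul_of_nonneg_right hxz (by linarith : (0:ℤ) ≤ 2*m+1)]
      · rcases hxysplit with hxe | hye
        · nlinarith [mul_le_mul_of_nonneg_right h1z (by linarith : (0:ℤ) ≤ 6*m+1)]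
        · nlinarith [mul_le_mul_of_nonneg_right h2z (by linarith : (0:ℤ) ≤ 2*m+1)]
    have htle : (t:ℤ) ≤ 6*m := by linarith
    have htlen : t ≤ 6*m := by exact_mod_cast htle
    rcases htS with ⟨A,B,C,htT⟩ | htF
    · rw [show 3*(2*m+1) - 2 = 6*m+1 from by omega,
        show 3*(2*m+1) - 1 = 6*m+2 from by omega] at htT
      have hB : B = 0 := by
        by_contra hB
        have h1 : 6*m+1 ≤ B*(6*m+1) := Nat.le_mul_of_pos_left _ (by omega)
        have h2 : B*(6*m+1) ≤ t := by rw [htT]; omega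
        omega
      have hC : C = 0 := by
        by_contra hC
        have h1 : 6*m+2 ≤ C*(6*m+2) := Nat.le_mul_of_pos_left _ (by omega)
        have h2 : C*(6*m+2) ≤ t := by rw [htT]; omega
        omega
      subst hB; subst hC
      simp only [Nat.zero_mul, Nat.add_zero, Nat.mul_zero] at htT
      have htz : (t:ℤ) = A*(2*m+1) := by exact_mod_cast htT
      rw [htz] at hteqz
      obtain ⟨k, hkdef⟩ : ∃ k : ℤ, k = (x:ℤ) + 3*y + 3*z - A - 3*m + 2 := ⟨_, rfl⟩
      have hk : k*(2*(m:ℤ)+1) = 2*(y:ℤ) + z + 2 := by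
        rw [hkdef]; linear_combination -hteqz
      have hk1 : k = 1 := by
        rcases lt_trichotomy k 1 with h | h | h
        · exfalso
          have h0 : k ≤ 0 := by linarith
          have : k*(2*(m:ℤ)+1) ≤ 0 := mul_nonpos_of_nonpos_of_nonneg h0 (by linarith)
          linarith
        · exact h
        · exfalso
          have h2 : (2:ℤ) ≤ k := h
          have : 2*(2*(m:ℤ)+1) ≤ k*(2*(m:ℤ)+1) :=
            mul_le_mul_of_nonneg_right h2 (by linarith)
          linarith
      rw [hk1, one_mul] at hk
      have hk' : 2*m+1 = 2*y+z+2 := by exact_mod_cast hk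
      rcases Nat.eq_or_lt_of_le hz with hz' | hz'
      · have := hz1 hz'
        omega
      · have hz0' : z = 0 := by omega
        have := hym (by omega : y = m)
        omega
    · -- t = FT
      have ht2 : (t:ℤ) = 6*(m:ℤ)^2 - m := by
        rw [show t = FT (2*m+1) from htF, FT_cast m hm]
      clear * - ht2 htle hmz
      nlinarith [ht2, htle, hmz]

lemma trade1 (m x y z : ℕ) (hz : 2 ≤ z) :
    phi (2*m+1) (x+3, y+1, z-2) = phi (2*m+1) (x, y, z) := by
  obtain ⟨z', rfl⟩ : ∃ z', z = z' + 2 := ⟨z - 2, by omega⟩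
  rw [phi_eval_s8, phi_eval_s8]
  simp only [Nat.add_sub_cancel]
  ring

lemma trade2 (m x y z : ℕ) (hm : 1 ≤ m) (hy : m + 1 ≤ y) :
    phi (2*m+1) (x+3*m-1, y-(m+1), z+1) = phi (2*m+1) (x, y, z) := by
  obtain ⟨y', rfl⟩ : ∃ y', y = y' + (m+1) := ⟨y - (m+1), by omega⟩
  rw [phi_eval_s8, phi_eval_s8]
  simp only [Nat.add_sub_cancel]
  obtain ⟨M, rfl⟩ : ∃ M, m = M + 1 := ⟨m - 1, by omega⟩
  have h1 : x+3*(M+1)-1 = x + (3*M+2) := by omega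
  rw [h1]
  ring

lemma trade3 (m x y z : ℕ) (hx : 3 ≤ x) (hy : 1 ≤ y) :
    phi (2*m+1) (x-3, y-1, z+2) = phi (2*m+1) (x, y, z) := by
  obtain ⟨x', rfl⟩ : ∃ x', x = x' + 3 := ⟨x - 3, by omega⟩
  obtain ⟨y', rfl⟩ : ∃ y', y = y' + 1 := ⟨y - 1, by omega⟩
  rw [phi_eval_s8, phi_eval_s8]
  simp only [Nat.add_sub_cancel]
  ring

lemma trade4 (m x y z : ℕ) (hm : 1 ≤ m) (hx : 3*m-1 ≤ x) (hz : 1 ≤ z) :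
    phi (2*m+1) (x-(3*m-1), y+m+1, z-1) = phi (2*m+1) (x, y, z) := by
  obtain ⟨x', rfl⟩ : ∃ x', x = x' + (3*m-1) := ⟨x - (3*m-1), by omega⟩
  obtain ⟨z', rfl⟩ : ∃ z', z = z' + 1 := ⟨z - 1, by omega⟩
  rw [phi_eval_s8, phi_eval_s8]
  simp only [Nat.add_sub_cancel]
  obtain ⟨M, rfl⟩ : ∃ M, m = M + 1 := ⟨m - 1, by omega⟩
  have : 3*(M+1) - 1 = 3*M+2 := by omega
  rw [this]
  ring

lemma mem_Tset (m a b c : ℕ) : a*(2*m+1) + b*(6*m+1) + c*(6*m+2) ∈ Tset (2*m+1) :=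
  ⟨a, b, c, by rw [show 3*(2*m+1)-2 = 6*m+1 from by omega,
    show 3*(2*m+1)-1 = 6*m+2 from by omega]⟩

set_option maxHeartbeats 2000000 in
lemma b_dir (m : ℕ) (hm : 2 ≤ m) (s : ℕ) (hApm : s ∈ Ap (2*m+1))
    (x y z : ℕ) (hZ : Zfac (2*m+1) s = {(x,y,z)}) :
    z ≤ 1 ∧ y ≤ m ∧ x ≤ 3*m ∧ (x ≤ 2 ∨ y = 0) ∧ (y = m → z = 0 ∧ x ≤ 1) ∧
      (z = 1 → y + 2 ≤ m ∧ x + 2 ≤ 3*m) := by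
  have hphi : phi (2*m+1) (x,y,z) = s := by
    have h : (x,y,z) ∈ Zfac (2*m+1) s := by rw [hZ]; rfl
    exact h
  have key : ∀ q : ℕ×ℕ×ℕ, phi (2*m+1) q = s → q = (x,y,z) := by
    intro q hq
    have hmem : q ∈ Zfac (2*m+1) s := hq
    rwa [hZ] at hmem
  obtain ⟨hS, hAp2⟩ := hApm
  have h1 : z ≤ 1 := by
    by_contra h
    have := key _ ((trade1 m x y z (by omega)).trans hphi)
    simp only [Prod.mk.injEq] at this
    omega
  have h2 : y ≤ m := by
    by_contra h
    have := key _ ((trade2 m x y z (by omega) (by omega)).trans hphi)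
    simp only [Prod.mk.injEq] at this
    omega
  have h3 : x ≤ 2 ∨ y = 0 := by
    by_contra h
    push_neg at h
    have := key _ ((trade3 m x y z (by omega) (by omega)).trans hphi)
    simp only [Prod.mk.injEq] at this
    omega
  have h4 : z = 0 ∨ x + 2 ≤ 3*m := by
    by_contra h
    push_neg at h
    have := key _ ((trade4 m x y z (by omega) (by omega) (by omega)).trans hphi)
    simp only [Prod.mk.injEq] at this
    omega
  have h5 : x ≤ 3*m := by
    by_contra h
    push_neg at h
    obtain ⟨x', rfl⟩ : ∃ x', x = x' + (3*m+1) := ⟨x - (3*m+1), by omega⟩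
    refine hAp2 ⟨x'*(2*m+1) + (y+1)*(6*m+1) + z*(6*m+2), Or.inl (mem_Tset m x' (y+1) z), ?_⟩
    rw [← hphi, phi_eval_s8]
    zify
    rw [FT_cast m hm]
    push_cast
    ring
  have h7 : z = 1 → y + 2 ≤ m ∧ x + 2 ≤ 3*m := by
    intro hz1
    refine ⟨?_, by omega⟩
    by_contra h
    push_neg at h
    rcases (by omega : y = m ∨ y = m - 1) with hy | hy
    · subst hz1
      refine hAp2 ⟨(x+1)*(2*m+1) + 1*(6*m+1) + 0*(6*m+2), Or.inl (mem_Tset m (x+1) 1 0), ?_⟩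
      rw [← hphi, phi_eval_s8, hy]
      zify
      rw [FT_cast m hm]
      push_cast
      ring
    · subst hz1
      refine hAp2 ⟨(x+1)*(2*m+1) + 0*(6*m+1) + 0*(6*m+2), Or.inl (mem_Tset m (x+1) 0 0), ?_⟩
      have hm' : m = y + 1 := by omega
      subst hm'
      rw [← hphi, phi_eval_s8]
      zify
      rw [FT_cast (y+1) (by omega)]
      push_cast
      ring
  have h6 : y = m → z = 0 ∧ x ≤ 1 := by
    intro hy
    have hz0 : z = 0 := by
      rcases (by omega : z = 0 ∨ z = 1) with h | h
      · exact h
      · have := h7 h; omega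
    refine ⟨hz0, ?_⟩
    by_contra h
    push_neg at h
    obtain ⟨x', rfl⟩ : ∃ x', x = x' + 2 := ⟨x - 2, by omega⟩
    refine hAp2 ⟨x'*(2*m+1) + 0*(6*m+1) + 1*(6*m+2), Or.inl (mem_Tset m x' 0 1), ?_⟩
    rw [← hphi, phi_eval_s8, hy, hz0]
    zify
    rw [FT_cast m hm]
    push_cast
    ring
  exact ⟨h1, h2, h5, h3, h6, h7⟩

def Vfin (m : ℕ) : Finset (ℕ × ℕ × ℕ) :=
  ((Finset.range (3*m+1)).image fun x => (x,0,0)) ∪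
  (((Finset.range 3) ×ˢ (Finset.Ico 1 m)).image fun q => (q.1,q.2,0)) ∪
  ((Finset.range 2).image fun x => (x,m,0)) ∪
  ((Finset.range (3*m-1)).image fun x => (x,0,1)) ∪
  (((Finset.range 3) ×ˢ (Finset.Ico 1 (m-1))).image fun q => (q.1,q.2,1))

lemma Vfin_mem (m : ℕ) (hm : 2 ≤ m) (x y z : ℕ) :
    (x,y,z) ∈ Vfin m ↔
      ((z = 0 ∧ y = 0 ∧ x ≤ 3*m) ∨ (z = 0 ∧ 1 ≤ y ∧ y + 1 ≤ m ∧ x ≤ 2) ∨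
      (z = 0 ∧ y = m ∧ x ≤ 1) ∨ (z = 1 ∧ y = 0 ∧ x + 2 ≤ 3*m) ∨
      (z = 1 ∧ 1 ≤ y ∧ y + 2 ≤ m ∧ x ≤ 2)) := by
  simp only [Vfin, Finset.mem_union, Finset.mem_image, Finset.mem_range,
    Finset.mem_product, Finset.mem_Ico, Prod.mk.injEq, Prod.exists]
  constructor
  · rintro ((((⟨a, ha, rfl, rfl, rfl⟩ | ⟨a, b, ⟨ha, hb⟩, rfl, rfl, rfl⟩) |
      ⟨a, ha, rfl, rfl, rfl⟩) | ⟨a, ha, rfl, rfl, rfl⟩) |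
      ⟨a, b, ⟨ha, hb⟩, rfl, rfl, rfl⟩) <;> omega
  · rintro (⟨rfl, rfl, hx⟩ | ⟨rfl, hy1, hy2, hx⟩ | ⟨rfl, rfl, hx⟩ | ⟨rfl, rfl, hx⟩ |
      ⟨rfl, hy1, hy2, hx⟩)
    · exact Or.inl (Or.inl (Or.inl (Or.inl ⟨x, by omega, rfl, rfl, rfl⟩)))
    · exact Or.inl (Or.inl (Or.inl (Or.inr ⟨x, y, ⟨by omega, by omega, by omega⟩, rfl, rfl, rfl⟩)))
    · exact Or.inl (Or.inl (Or.inr ⟨x, by omega, rfl, rfl, rfl⟩))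
    · exact Or.inl (Or.inr ⟨x, by omega, rfl, rfl, rfl⟩)
    · exact Or.inr ⟨x, y, ⟨by omega, by omega, by omega⟩, rfl, rfl, rfl⟩

lemma Vfin_card (m : ℕ) (hm : 2 ≤ m) : (Vfin m).card = 12*m - 7 := by
  have hinj1 : Function.Injective (fun x : ℕ => (x,(0:ℕ),(0:ℕ))) := by
    intro a b h; simpa using h
  have hinj2 : Function.Injective (fun x : ℕ => (x,m,(0:ℕ))) := by
    intro a b h; simpa using h
  have hinj3 : Function.Injective (fun x : ℕ => (x,(0:ℕ),(1:ℕ))) := by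
    intro a b h; simpa using h
  have hinj4 : Function.Injective (fun q : ℕ × ℕ => (q.1,q.2,(0:ℕ))) := by
    intro ⟨a,b⟩ ⟨c,d⟩ h; simpa [Prod.ext_iff] using h
  have hinj5 : Function.Injective (fun q : ℕ × ℕ => (q.1,q.2,(1:ℕ))) := by
    intro ⟨a,b⟩ ⟨c,d⟩ h; simpa [Prod.ext_iff] using h
  have hmem : ∀ (p : ℕ × ℕ × ℕ) (W : Finset (ℕ × ℕ × ℕ)), p ∈ W → p ∈ W := fun _ _ h => h
  rw [Vfin]
  rw [Finset.card_union_of_disjoint ?d4, Finset.card_union_of_disjoint ?d3,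
    Finset.card_union_of_disjoint ?d2, Finset.card_union_of_disjoint ?d1]
  case d1 =>
    rw [Finset.disjoint_left]
    intro p hp hq
    simp only [Finset.mem_image, Finset.mem_range, Finset.mem_product, Finset.mem_Ico,
      Prod.exists] at hp hq
    obtain ⟨a, ha, rfl⟩ := hp
    obtain ⟨b, c, hbc, heq⟩ := hq
    simp only [Prod.mk.injEq] at heq
    omega
  case d2 =>
    rw [Finset.disjoint_left]
    intro p hp hq
    simp only [Finset.mem_union, Finset.mem_image, Finset.mem_range, Finset.mem_product,
      Finset.mem_Ico, Prod.exists] at hp hq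
    obtain ⟨c, hc, rfl⟩ := hq
    rcases hp with ⟨a, ha, heq⟩ | ⟨a, b, hab, heq⟩ <;>
      simp only [Prod.mk.injEq] at heq <;> omega
  case d3 =>
    rw [Finset.disjoint_left]
    intro p hp hq
    simp only [Finset.mem_union, Finset.mem_image, Finset.mem_range, Finset.mem_product,
      Finset.mem_Ico, Prod.exists] at hp hq
    obtain ⟨c, hc, rfl⟩ := hq
    rcases hp with (⟨a, ha, heq⟩ | ⟨a, b, hab, heq⟩) | ⟨a, ha, heq⟩ <;>
      simp only [Prod.mk.injEq] at heq <;> omega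
  case d4 =>
    rw [Finset.disjoint_left]
    intro p hp hq
    simp only [Finset.mem_union, Finset.mem_image, Finset.mem_range, Finset.mem_product,
      Finset.mem_Ico, Prod.exists] at hp hq
    obtain ⟨b, c, hbc, rfl⟩ := hq
    rcases hp with ((⟨a, ha, heq⟩ | ⟨a, a2, hab, heq⟩) | ⟨a, ha, heq⟩) | ⟨a, ha, heq⟩ <;>
      simp only [Prod.mk.injEq] at heq <;> omega
  rw [Finset.card_image_of_injective _ hinj1, Finset.card_image_of_injective _ hinj4,
    Finset.card_image_of_injective _ hinj2, Finset.card_image_of_injective _ hinj3,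
    Finset.card_image_of_injective _ hinj5, Finset.card_product, Finset.card_product,
    Finset.card_range, Finset.card_range, Finset.card_range, Finset.card_range,
    Nat.card_Ico, Nat.card_Ico]
  omega

/-- Exactly `6n - 13` elements of `Ap(S, F(T))` have a unique factorization. -/
theorem stmt8 (n : ℕ) (hodd : Odd n) (hn : 5 ≤ n) :
    {s ∈ Ap n | (Zfac n s).ncard = 1}.ncard = 6 * n - 13 := by
  obtain ⟨m, hm⟩ := hodd
  have hm2 : 2 ≤ m := by omega
  obtain rfl : n = 2*m+1 := by omega
  have hmain : {s ∈ Ap (2*m+1) | (Zfac (2*m+1) s).ncard = 1}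
      = phi (2*m+1) '' (Vfin m : Set (ℕ×ℕ×ℕ)) := by
    ext s
    simp only [Set.mem_setOf_eq, Set.mem_image, Finset.mem_coe]
    constructor
    · rintro ⟨hApm, hcard⟩
      obtain ⟨p, hp⟩ := Set.ncard_eq_one.mp hcard
      obtain ⟨x,y,z⟩ := p
      obtain ⟨h1,h2,h5,h3,h6,h7⟩ := b_dir m hm2 s hApm x y z hp
      have hphi : phi (2*m+1) (x,y,z) = s := by
        have h : (x,y,z) ∈ Zfac (2*m+1) s := by rw [hp]; rfl
        exact h
      refine ⟨(x,y,z), ?_, hphi⟩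
      rw [Vfin_mem m hm2]
      omega
    · rintro ⟨⟨x,y,z⟩, hpV, rfl⟩
      rw [Vfin_mem m hm2] at hpV
      have c1 : z ≤ 1 := by omega
      have c2 : y ≤ m := by omega
      have c3 : x ≤ 3*m := by omega
      have c4 : x ≤ 2 ∨ y = 0 := by omega
      have c5 : y = m → z = 0 ∧ x ≤ 1 := by omega
      have c6 : z = 1 → y + 2 ≤ m ∧ x + 2 ≤ 3*m := by omega
      refine ⟨mem_Ap m hm2 x y z c1 c2 c3 c4 c5 c6, ?_⟩
      rw [uniq_fac m hm2 x y z c1 c2 c3 c4 c6]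
      exact Set.ncard_singleton _
  rw [hmain, Set.ncard_image_of_injOn, Set.ncard_coe_finset, Vfin_card m hm2]
  · omega
  · rintro ⟨x,y,z⟩ hp ⟨u,v,w⟩ hq heq
    rw [Finset.mem_coe, Vfin_mem m hm2] at hp
    have c1 : z ≤ 1 := by omega
    have c2 : y ≤ m := by omega
    have c3 : x ≤ 3*m := by omega
    have c4 : x ≤ 2 ∨ y = 0 := by omega
    have c6 : z = 1 → y + 2 ≤ m ∧ x + 2 ≤ 3*m := by omega
    have hsing := uniq_fac m hm2 x y z c1 c2 c3 c4 c6
    have hmem : (u,v,w) ∈ Zfac (2*m+1) (phi (2*m+1) (x,y,z)) := heq.symm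
    rw [hsing] at hmem
    exact hmem.symm
end
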